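/- arXiv:1806.05066 — 6 statements merged into one kernel-verified Lean document; each statement's English description precedes it below -/
import Mathlib

section
/- Let $A, B$ be negative operators (in the sense of Komatsu) on a Banach space $X$ with $D(A) \subseteq D(B)$ and $A - B$ extending to a bounded operator in a symmetrically normed operator ideal $\mathcal{I}$. Let $\varphi(z) = \int_{(0,\infty)} \frac{z}{t-z} d\mu(t)$ be a negative complete Bernstein function. Then $\varphi(A) - \varphi(B) \in \mathcal{I}$ and $\|\varphi(A)-\varphi(B)\|_{\mathcal{I}} \le M_A M_B \varphi'(-1) \|A-B\|_{\mathcal{I}}$, where $\varphi'(-1) = \int_{(0,\infty)} t\,d\mu(t)/(1+t)^2$. -/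
open MeasureTheory Set

variable {X : Type*} [NormedAddCommGroup X] [NormedSpace ℂ X] [CompleteSpace X]

/-- `R` is the resolvent of the (possibly unbounded) operator `A` at the real point `t`,
i.e. `R` is an everywhere defined two-sided bounded inverse of `t•I - A`. -/
structure IsResolvent (A : X →ₗ.[ℂ] X) (t : ℝ) (R : X →L[ℂ] X) : Prop where
  mem : ∀ x : X, R x ∈ A.domain
  right_inv : ∀ x : X, (t : ℂ) • (R x) - A ⟨R x, mem x⟩ = x
  left_inv : ∀ x : A.domain, R ((t : ℂ) • (x : X) - A x) = x

/-- The sum of an unbounded operator and a bounded operator, defined on the domain of the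
unbounded one. -/
noncomputable def pAdd (A : X →ₗ.[ℂ] X) (V : X →L[ℂ] X) : X →ₗ.[ℂ] X where
  domain := A.domain
  toFun := A.toFun + (V : X →ₗ[ℂ] X).comp A.domain.subtype

/-- A symmetrically normed operator ideal in `L(X)`: a two-sided ideal with a complete norm
`inorm` dominating the operator norm and satisfying `‖A S B‖_I ≤ ‖A‖ ‖S‖_I ‖B‖`.
Completeness is encoded through closure under Bochner integration with a dominating
`I`-norm bound. -/
structure OperatorIdeal (X : Type*) [NormedAddCommGroup X] [NormedSpace ℂ X] where
  Mem : (X →L[ℂ] X) → Prop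
  inorm : (X →L[ℂ] X) → ℝ
  zero_mem : Mem 0
  add_mem : ∀ {S T}, Mem S → Mem T → Mem (S + T)
  smul_mem : ∀ (c : ℂ) {S}, Mem S → Mem (c • S)
  comp_mem : ∀ (A : X →L[ℂ] X) {S} (B : X →L[ℂ] X), Mem S → Mem (A.comp (S.comp B))
  inorm_nonneg : ∀ S, 0 ≤ inorm S
  inorm_add_le : ∀ S T, inorm (S + T) ≤ inorm S + inorm T
  inorm_smul : ∀ (c : ℂ) (S), inorm (c • S) = ‖c‖ * inorm S
  inorm_comp_le : ∀ (A S B : X →L[ℂ] X), Mem S →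
    inorm (A.comp (S.comp B)) ≤ ‖A‖ * inorm S * ‖B‖
  opNorm_le_inorm : ∀ S, Mem S → ‖S‖ ≤ inorm S
  integral_mem : ∀ (μ : MeasureTheory.Measure ℝ) (f : ℝ → (X →L[ℂ] X)) (g : ℝ → ℝ),
    MeasureTheory.Integrable g μ → (∀ᵐ t ∂μ, Mem (f t) ∧ inorm (f t) ≤ g t) →
    MeasureTheory.Integrable f μ →
    Mem (∫ t, f t ∂μ) ∧ inorm (∫ t, f t ∂μ) ≤ ∫ t, g t ∂μ

/-!
For `t > 0` the integrand `t R(t,A) W R(t,B)` lies in `I`, and the ideal inequality together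
with `‖R(t,·)‖ ≤ M/(1+t)` bounds its `I`-norm by `M_A M_B ‖W‖_I t/(1+t)²`, which is
`μ`-integrable since `t/(1+t)² ≤ 1/(1+t)`. The resolvent identity makes `t ↦ R(t,·)` Lipschitz
on `(0,∞)`, so the integrand is strongly measurable and the closure of `I` under dominated
Bochner integrals yields both membership and the norm estimate.
-/

section

variable {E : Type*} [NormedAddCommGroup E] [NormedSpace ℂ E]

theorem IsResolvent.sub_eq_smul_comp {A : E →ₗ.[ℂ] E} {s t : ℝ} {Rs Rt : E →L[ℂ] E}
    (hs : IsResolvent A s Rs) (ht : IsResolvent A t Rt) :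
    Rs - Rt = ((t - s : ℝ) : ℂ) • Rt.comp Rs := by
  ext x
  have hx : Rs x ∈ A.domain := hs.mem x
  have hsplit : (t : ℂ) • Rs x - A ⟨Rs x, hx⟩
      = ((t - s : ℝ) : ℂ) • Rs x + ((s : ℂ) • Rs x - A ⟨Rs x, hx⟩) := by
    push_cast; module
  have h := ht.left_inv ⟨Rs x, hx⟩
  rw [hsplit, hs.right_inv x, map_add, map_smul] at h
  simp only [sub_apply, smul_apply, ContinuousLinearMap.comp_apply]
  exact (eq_sub_of_add_eq h).symm

theorem lipschitzOnWith_of_isResolvent {A : E →ₗ.[ℂ] E} {R : ℝ → E →L[ℂ] E} {s : Set ℝ}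
    {C : ℝ} (hR : ∀ t ∈ s, IsResolvent A t (R t)) (hC : ∀ t ∈ s, ‖R t‖ ≤ C) :
    LipschitzOnWith (C * C).toNNReal R s := by
  refine LipschitzOnWith.of_dist_le' fun a ha b hb => ?_
  have hC0 : 0 ≤ C := (norm_nonneg _).trans (hC a ha)
  rw [dist_eq_norm, Real.dist_eq, (hR a ha).sub_eq_smul_comp (hR b hb), norm_smul,
    Complex.norm_real, Real.norm_eq_abs, abs_sub_comm, mul_comm]
  gcongr
  calc ‖(R b).comp (R a)‖ ≤ ‖R b‖ * ‖R a‖ := (R b).opNorm_comp_le (R a)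
    _ ≤ C * C := mul_le_mul (hC b hb) (hC a ha) (norm_nonneg _) hC0

theorem continuousOn_Ioi_of_isResolvent {A : E →ₗ.[ℂ] E} {R : ℝ → E →L[ℂ] E} {M : ℝ}
    (hR : ∀ t > 0, IsResolvent A t (R t)) (hM : ∀ t > 0, (1 + t) * ‖R t‖ ≤ M) :
    ContinuousOn R (Ioi 0) :=
  (lipschitzOnWith_of_isResolvent (C := M) hR fun t ht =>
    (le_mul_of_one_le_left (norm_nonneg _) (by linarith [mem_Ioi.mp ht])).trans
      (hM t ht)).continuousOn

namespace OperatorIdeal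

variable (I : OperatorIdeal E)

theorem integral_mem_of_aestronglyMeasurable {μ : Measure ℝ} {f : ℝ → E →L[ℂ] E} {g : ℝ → ℝ}
    (hg : Integrable g μ) (hf : AEStronglyMeasurable f μ)
    (hfg : ∀ᵐ t ∂μ, I.Mem (f t) ∧ I.inorm (f t) ≤ g t) :
    I.Mem (∫ t, f t ∂μ) ∧ I.inorm (∫ t, f t ∂μ) ≤ ∫ t, g t ∂μ :=
  I.integral_mem μ f g hg hfg <| hg.mono' hf <| hfg.mono fun _ ht =>
    (I.opNorm_le_inorm _ ht.1).trans ht.2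

theorem inorm_smul_comp_comp_le {c a b : ℝ} (hc : 0 ≤ c) {P S Q : E →L[ℂ] E} (hS : I.Mem S)
    (hP : ‖P‖ ≤ a) (hQ : ‖Q‖ ≤ b) :
    I.inorm ((c : ℂ) • P.comp (S.comp Q)) ≤ c * a * b * I.inorm S := by
  have ha : 0 ≤ a := (norm_nonneg _).trans hP
  rw [I.inorm_smul, Complex.norm_real, Real.norm_of_nonneg hc]
  calc c * I.inorm (P.comp (S.comp Q)) ≤ c * (‖P‖ * I.inorm S * ‖Q‖) := by
        gcongr; exact I.inorm_comp_le P S Q hS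
    _ ≤ c * (a * I.inorm S * b) := by
        have := I.inorm_nonneg S
        gcongr
    _ = c * a * b * I.inorm S := by ring

end OperatorIdeal

end

theorem integrable_div_one_add_sq {μ : Measure ℝ} (hμ : Integrable (fun t => (1 + t)⁻¹) μ)
    (hpos : ∀ᵐ t ∂μ, 0 ≤ t) : Integrable (fun t => t / (1 + t) ^ 2) μ := by
  have hmeas : Measurable fun t : ℝ => t / (1 + t) ^ 2 := by fun_prop
  refine hμ.mono' hmeas.aestronglyMeasurable (hpos.mono fun t ht => ?_)
  rw [Real.norm_of_nonneg (by positivity), div_le_iff₀ (by positivity), sq, ← mul_assoc,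
    inv_mul_cancel₀ (by positivity)]
  linarith

theorem Bernstein_difference_negative_general
    (I : OperatorIdeal X)
    (A B : X →ₗ.[ℂ] X)
    (RA RB : ℝ → (X →L[ℂ] X))
    (hRA : ∀ t ≥ (0 : ℝ), IsResolvent A t (RA t))
    (hRB : ∀ t ≥ (0 : ℝ), IsResolvent B t (RB t))
    (MA MB : ℝ)
    (hMA : IsLUB ((fun t => (1 + t) * ‖RA t‖) '' Ioi (0 : ℝ)) MA)
    (hMB : IsLUB ((fun t => (1 + t) * ‖RB t‖) '' Ioi (0 : ℝ)) MB)
    (W : X →L[ℂ] X) (hW : I.Mem W)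
    (μ : Measure ℝ) (hsupp : μ (Iic (0 : ℝ)) = 0)
    (hμ : Integrable (fun t => (1 + t)⁻¹) μ) :
    I.Mem (∫ t, (t : ℂ) • ((RA t).comp (W.comp (RB t))) ∂μ) ∧
      I.inorm (∫ t, (t : ℂ) • ((RA t).comp (W.comp (RB t))) ∂μ) ≤
        MA * MB * (∫ t, t / (1 + t) ^ 2 ∂μ) * I.inorm W := by
  have hpos : ∀ᵐ t ∂μ, 0 < t := by
    rw [ae_iff]; simp only [not_lt]; exact hsupp
  have hA : ∀ t > 0, (1 + t) * ‖RA t‖ ≤ MA := fun t ht => hMA.1 ⟨t, ht, rfl⟩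
  have hB : ∀ t > 0, (1 + t) * ‖RB t‖ ≤ MB := fun t ht => hMB.1 ⟨t, ht, rfl⟩
  have hcont : ContinuousOn (fun t : ℝ => (t : ℂ) • (RA t).comp (W.comp (RB t))) (Ioi 0) :=
    Complex.continuous_ofReal.continuousOn.smul
      ((continuousOn_Ioi_of_isResolvent (fun t ht => hRA t ht.le) hA).clm_comp
        (continuousOn_const.clm_comp
          (continuousOn_Ioi_of_isResolvent (fun t ht => hRB t ht.le) hB)))
  have hmeas := hcont.aestronglyMeasurable (μ := μ) measurableSet_Ioi
  rw [Measure.restrict_eq_self_of_ae_mem (s := Ioi 0) hpos] at hmeas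
  have hbound : ∀ᵐ (t : ℝ) ∂μ, I.Mem ((t : ℂ) • (RA t).comp (W.comp (RB t))) ∧
      I.inorm ((t : ℂ) • (RA t).comp (W.comp (RB t))) ≤
        MA * MB * (t / (1 + t) ^ 2) * I.inorm W := by
    filter_upwards [hpos] with t ht
    have h1t : 0 < 1 + t := by linarith
    refine ⟨I.smul_mem _ (I.comp_mem _ _ hW), ?_⟩
    calc _ ≤ t * (MA / (1 + t)) * (MB / (1 + t)) * I.inorm W :=
          I.inorm_smul_comp_comp_le ht.le hW ((le_div_iff₀' h1t).mpr (hA t ht))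
            ((le_div_iff₀' h1t).mpr (hB t ht))
      _ = MA * MB * (t / (1 + t) ^ 2) * I.inorm W := by field_simp
  have hint := ((integrable_div_one_add_sq hμ (hpos.mono fun _ => le_of_lt)).const_mul
    (MA * MB)).mul_const (I.inorm W)
  obtain ⟨hmem, hle⟩ := I.integral_mem_of_aestronglyMeasurable hint hmeas hbound
  refine ⟨hmem, hle.trans_eq ?_⟩
  rw [integral_mul_const, integral_const_mul]

/-- Lemma 2(i): for negative operators `A, B` with `D(A) ⊆ D(B)` whose difference extends to an
operator `W` in a symmetrically normed ideal `I`, the operator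
`φ(A) - φ(B) = ∫ t R(t,A) (A-B) R(t,B) dμ(t)` belongs to `I` and
`‖φ(A)-φ(B)‖_I ≤ M_A M_B φ'(-1) ‖A-B‖_I` where `φ'(-1) = ∫ t/(1+t)² dμ(t)`. -/
theorem Bernstein_difference_negative
    (I : OperatorIdeal X)
    (A B : X →ₗ.[ℂ] X)
    (hAclosed : IsClosed (A.graph : Set (X × X)))
    (hBclosed : IsClosed (B.graph : Set (X × X)))
    (hAdense : Dense (A.domain : Set X)) (hBdense : Dense (B.domain : Set X))
    (RA RB : ℝ → (X →L[ℂ] X))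
    (hRA : ∀ t ≥ (0 : ℝ), IsResolvent A t (RA t))
    (hRB : ∀ t ≥ (0 : ℝ), IsResolvent B t (RB t))
    (MA MB : ℝ)
    (hMA : IsLUB ((fun t => (1 + t) * ‖RA t‖) '' Ioi (0 : ℝ)) MA)
    (hMB : IsLUB ((fun t => (1 + t) * ‖RB t‖) '' Ioi (0 : ℝ)) MB)
    (hdom : A.domain ≤ B.domain)
    (W : X →L[ℂ] X) (hW : I.Mem W)
    (hWext : ∀ x : A.domain, W (x : X) = A x - B ⟨(x : X), hdom x.2⟩)
    (μ : Measure ℝ) (hsupp : μ (Iic (0 : ℝ)) = 0)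
    (hμ : Integrable (fun t => (1 + t)⁻¹) μ) :
    I.Mem (∫ t, (t : ℂ) • ((RA t).comp (W.comp (RB t))) ∂μ) ∧
      I.inorm (∫ t, (t : ℂ) • ((RA t).comp (W.comp (RB t))) ∂μ) ≤
        MA * MB * (∫ t, t / (1 + t) ^ 2 ∂μ) * I.inorm W :=
  Bernstein_difference_negative_general I A B RA RB hRA hRB MA MB hMA hMB W hW μ hsupp hμ
end

section
/- Let $\varphi$ be a negative complete Bernstein function with representing measure $\mu$ on $(0,\infty)$, $A$ a negative operator on a Banach space $X$, and $\mathcal{I}$ a symmetrically normed operator ideal. Then $\varphi$ is $\mathcal{I}$-Fréchet differentiable at $A$: for $\Delta A \in \mathcal{I}$ with $\|\Delta A\|_{\mathcal{I}} < 1/M_A$, one has $\|\varphi(A+\Delta A) - \varphi(A) - F_A(\Delta A)\|_{\mathcal{I}} \le 2M_A^3 \left(\int_0^\infty \frac{t\,d\mu(t)}{(1+t)^3}\right) \frac{\|\Delta A\|_{\mathcal{I}}^2}{1 - M_A\|\Delta A\|_{\mathcal{I}}}$, where $F_A(V) = \int_0^\infty R(t,A)VR(t,A)\,t\,d\mu(t)$.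 In particular the error is $o(\|\Delta A\|_{\mathcal{I}})$. -/
open MeasureTheory Set

variable {X : Type*} [NormedAddCommGroup X] [NormedSpace ℂ X] [CompleteSpace X]

omit [CompleteSpace X] in
lemma res_id1 {B : X →ₗ.[ℂ] X} {s t : ℝ} {Rs Rt : X →L[ℂ] X}
    (hs : IsResolvent B s Rs) (ht : IsResolvent B t Rt) :
    Rt = Rs + ((s : ℂ) - t) • Rs.comp Rt := by
  ext x
  have h1 : (s : ℂ) • Rt x - B ⟨Rt x, ht.mem x⟩ =
      ((s : ℂ) - t) • Rt x + ((t : ℂ) • Rt x - B ⟨Rt x, ht.mem x⟩) := by module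
  rw [ht.right_inv x] at h1
  have h2 := hs.left_inv ⟨Rt x, ht.mem x⟩
  simp only [Submodule.coe_mk] at h2
  rw [h1, map_add, _root_.map_smul] at h2
  simp only [ContinuousLinearMap.add_apply, ContinuousLinearMap.smul_apply,
    ContinuousLinearMap.comp_apply]
  rw [add_comm] at h2
  exact h2.symm

omit [CompleteSpace X] in
lemma res_id2 {A : X →ₗ.[ℂ] X} {ΔA : X →L[ℂ] X} {t : ℝ} {R R' : X →L[ℂ] X}
    (h : IsResolvent A t R) (h' : IsResolvent (pAdd A ΔA) t R') :
    R' = R + R'.comp (ΔA.comp R) := by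
  ext x
  have hy : R x ∈ (pAdd A ΔA).domain := h.mem x
  have hval : (pAdd A ΔA) ⟨R x, hy⟩ = A ⟨R x, h.mem x⟩ + ΔA (R x) := rfl
  have h1 : (t : ℂ) • (R x) - (pAdd A ΔA) ⟨R x, hy⟩ =
      ((t : ℂ) • (R x) - A ⟨R x, h.mem x⟩) - ΔA (R x) := by rw [hval]; abel
  rw [h.right_inv x] at h1
  have h2 := h'.left_inv ⟨R x, hy⟩
  simp only [Submodule.coe_mk] at h2
  rw [h1, map_sub] at h2
  simp only [ContinuousLinearMap.add_apply, ContinuousLinearMap.comp_apply]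
  exact sub_eq_iff_eq_add.mp h2

lemma res_lip {B : X →ₗ.[ℂ] X} {R : ℝ → (X →L[ℂ] X)}
    (hR : ∀ t ≥ (0:ℝ), IsResolvent B t (R t)) {C : ℝ}
    (hC : ∀ t ∈ Ioi (0:ℝ), ‖R t‖ ≤ C) : ContinuousOn R (Ioi 0) := by
  have hC0 : 0 ≤ C := le_trans (norm_nonneg _) (hC 1 (by norm_num))
  refine LipschitzOnWith.continuousOn (K := Real.toNNReal (C * C))
    (lipschitzOnWith_iff_dist_le_mul.mpr ?_)
  intro s hs t ht
  have hid := res_id1 (hR s (le_of_lt hs)) (hR t (le_of_lt ht))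
  have : R s - R t = -(((s : ℂ) - t) • (R s).comp (R t)) := by
    conv_lhs => rw [hid]
    abel
  rw [dist_eq_norm, this, norm_neg, norm_smul ((s : ℂ) - t) ((R s).comp (R t))]
  have h1 : ‖(s : ℂ) - (t : ℂ)‖ = |s - t| := by
    rw [← Complex.ofReal_sub, Complex.norm_real, Real.norm_eq_abs]
  rw [h1]
  have h2 : ‖(R s).comp (R t)‖ ≤ C * C :=
    le_trans (ContinuousLinearMap.opNorm_comp_le _ _)
      (mul_le_mul (hC s hs) (hC t ht) (norm_nonneg _) hC0)
  calc |s - t| * ‖(R s).comp (R t)‖ ≤ |s - t| * (C * C) :=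
        mul_le_mul_of_nonneg_left h2 (abs_nonneg _)
    _ = (Real.toNNReal (C * C) : ℝ) * dist s t := by
        rw [Real.coe_toNNReal _ (by positivity), dist_eq_norm, Real.norm_eq_abs]; ring


instance : SecondCountableTopologyEither ℝ (X →L[ℂ] X) :=
  ⟨Or.inl inferInstance⟩


set_option maxHeartbeats 1000000 in
/-- Theorem 1, part 1(a): a negative complete Bernstein function `φ` with representing measure
`μ` is `I`-Fréchet differentiable at a negative operator `A`, with derivative
`F_A(V) = ∫₀^∞ R(t,A) V R(t,A) t dμ(t)`; quantitatively, for `‖ΔA‖_I < 1/M_A`,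
`‖φ(A+ΔA) - φ(A) - F_A(ΔA)‖_I ≤ 2M_A³ (∫ t/(1+t)³ dμ(t)) ‖ΔA‖_I²/(1 - M_A‖ΔA‖_I)`,
which is `o(‖ΔA‖_I)`.  Here `φ(A+ΔA) - φ(A) = ∫ t R(t,A+ΔA) ΔA R(t,A) dμ(t)`. -/
theorem Frechet_differentiability_negative
    (I : OperatorIdeal X)
    (A : X →ₗ.[ℂ] X)
    (hAclosed : IsClosed (A.graph : Set (X × X)))
    (hAdense : Dense (A.domain : Set X))
    (RA : ℝ → (X →L[ℂ] X))
    (hRA : ∀ t ≥ (0 : ℝ), IsResolvent A t (RA t))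
    (M : ℝ) (hM : IsLUB ((fun t => (1 + t) * ‖RA t‖) '' Ioi (0 : ℝ)) M)
    (μ : Measure ℝ) (hsupp : μ (Iic (0 : ℝ)) = 0)
    (hμ : Integrable (fun t => (1 + t)⁻¹) μ)
    (ΔA : X →L[ℂ] X) (hΔA : I.Mem ΔA) (hsmall : I.inorm ΔA < 1 / M)
    (RA' : ℝ → (X →L[ℂ] X))
    (hRA' : ∀ t ≥ (0 : ℝ), IsResolvent (pAdd A ΔA) t (RA' t)) :
    I.inorm ((∫ t, (t : ℂ) • ((RA' t).comp (ΔA.comp (RA t))) ∂μ) -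
        ∫ t, (t : ℂ) • ((RA t).comp (ΔA.comp (RA t))) ∂μ) ≤
      2 * M ^ 3 * (∫ t, t / (1 + t) ^ 3 ∂μ) * I.inorm ΔA ^ 2 / (1 - M * I.inorm ΔA) := by
  set ε := I.inorm ΔA with hεdef
  have hε0 : 0 ≤ ε := I.inorm_nonneg ΔA
  have hM0 : 0 < M := by
    by_contra h
    push_neg at h
    have : 1 / M ≤ 0 := one_div_nonpos.mpr h
    linarith
  have hMε : M * ε < 1 := by
    have := (lt_div_iff₀ hM0).mp hsmall
    linarith [this]
  have hD : 0 < 1 - M * ε := by linarith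
  have hΔAop : ‖ΔA‖ ≤ ε := I.opNorm_le_inorm ΔA hΔA
  -- resolvent bounds
  have hRAb : ∀ t ∈ Ioi (0:ℝ), ‖RA t‖ ≤ M / (1 + t) := by
    intro t ht
    have ht0 : (0:ℝ) < t := ht
    have h1 : (1 + t) * ‖RA t‖ ≤ M := hM.1 (mem_image_of_mem _ ht)
    rw [le_div_iff₀ (by linarith : (0:ℝ) < 1 + t)]
    linarith
  have hRAu : ∀ t ∈ Ioi (0:ℝ), ‖RA t‖ ≤ M := by
    intro t ht
    have ht0 : (0:ℝ) < t := ht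
    refine (hRAb t ht).trans ?_
    rw [div_le_iff₀ (by linarith : (0:ℝ) < 1 + t)]
    nlinarith
  have hRA'b : ∀ t ∈ Ioi (0:ℝ), ‖RA' t‖ ≤ M / ((1 + t) * (1 - M * ε)) := by
    intro t ht
    have ht0 : (0:ℝ) < t := ht
    have h1t : (0:ℝ) < 1 + t := by linarith
    have hid := res_id2 (hRA t ht0.le) (hRA' t ht0.le)
    have h1 : ‖RA' t‖ ≤ ‖RA t‖ + ‖RA' t‖ * (‖ΔA‖ * ‖RA t‖) := by
      calc ‖RA' t‖ = ‖RA t + (RA' t).comp (ΔA.comp (RA t))‖ := by rw [← hid]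
        _ ≤ ‖RA t‖ + ‖(RA' t).comp (ΔA.comp (RA t))‖ := norm_add_le _ _
        _ ≤ ‖RA t‖ + ‖RA' t‖ * (‖ΔA‖ * ‖RA t‖) := by
            refine add_le_add le_rfl ?_
            calc ‖(RA' t).comp (ΔA.comp (RA t))‖ ≤ ‖RA' t‖ * ‖ΔA.comp (RA t)‖ :=
                  ContinuousLinearMap.opNorm_comp_le _ _
              _ ≤ ‖RA' t‖ * (‖ΔA‖ * ‖RA t‖) :=
                  mul_le_mul_of_nonneg_left (ContinuousLinearMap.opNorm_comp_le _ _)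
                    (norm_nonneg _)
    have h2 : ‖ΔA‖ * ‖RA t‖ ≤ ε * M := by
      apply mul_le_mul hΔAop (hRAu t ht) (norm_nonneg _) hε0
    have h3 : ‖RA' t‖ * (‖ΔA‖ * ‖RA t‖) ≤ ‖RA' t‖ * (ε * M) :=
      mul_le_mul_of_nonneg_left h2 (norm_nonneg _)
    have h4 : ‖RA' t‖ * (1 - M * ε) ≤ M / (1 + t) := by
      have := hRAb t ht
      nlinarith [norm_nonneg (RA' t)]
    rw [le_div_iff₀ (by positivity : (0:ℝ) < (1 + t) * (1 - M * ε))]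
    calc ‖RA' t‖ * ((1 + t) * (1 - M * ε)) = (‖RA' t‖ * (1 - M * ε)) * (1 + t) := by ring
      _ ≤ (M / (1 + t)) * (1 + t) := by
          exact mul_le_mul_of_nonneg_right h4 h1t.le
      _ = M := by field_simp
  have hRA'u : ∀ t ∈ Ioi (0:ℝ), ‖RA' t‖ ≤ M / (1 - M * ε) := by
    intro t ht
    have ht0 : (0:ℝ) < t := ht
    refine (hRA'b t ht).trans ?_
    rw [div_le_div_iff₀ (by positivity) hD]
    nlinarith [mul_nonneg (mul_nonneg hM0.le hD.le) ht0.le]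
  -- measurability
  have hae : ∀ᵐ t ∂μ, t ∈ Ioi (0:ℝ) := by
    rw [ae_iff]
    have : {t : ℝ | ¬ t ∈ Ioi (0:ℝ)} = Iic 0 := by ext t; simp [not_lt]
    rw [this]; exact hsupp
  have hres : μ.restrict (Ioi (0:ℝ)) = μ := Measure.restrict_eq_self_of_ae_mem hae
  have hRAcont : ContinuousOn RA (Ioi 0) := res_lip hRA (fun t ht => hRAu t ht)
  have hRA'cont : ContinuousOn RA' (Ioi 0) := res_lip hRA' (fun t ht => hRA'u t ht)
  have hcoe : ContinuousOn (fun t : ℝ => (t : ℂ)) (Ioi 0) :=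
    Complex.continuous_ofReal.continuousOn
  have hfm : AEStronglyMeasurable (fun t : ℝ => (t : ℂ) • ((RA' t).comp (ΔA.comp (RA t)))) μ := by
    rw [← hres]
    exact (hcoe.smul (hRA'cont.clm_comp (continuousOn_const.clm_comp
      hRAcont))).aestronglyMeasurable measurableSet_Ioi
  have hgm : AEStronglyMeasurable (fun t : ℝ => (t : ℂ) • ((RA t).comp (ΔA.comp (RA t)))) μ := by
    rw [← hres]
    exact (hcoe.smul (hRAcont.clm_comp (continuousOn_const.clm_comp
      hRAcont))).aestronglyMeasurable measurableSet_Ioi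
  -- generic norm bound
  have hnorm : ∀ (R1 R2 : X →L[ℂ] X) (t C1 C2 : ℝ), 0 < t → 0 < 1 + t → 0 ≤ C1 → 0 ≤ C2 →
      ‖R1‖ ≤ C1 / (1 + t) → ‖R2‖ ≤ C2 / (1 + t) →
      ‖(t : ℂ) • (R1.comp (ΔA.comp R2))‖ ≤ (C1 * ε * C2) * (1 + t)⁻¹ := by
    intro R1 R2 t C1 C2 ht h1t hC1 hC2 hR1 hR2
    rw [norm_smul (t : ℂ) (R1.comp (ΔA.comp R2))]
    have hnt : ‖(t : ℂ)‖ = t := by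
      rw [Complex.norm_real, Real.norm_eq_abs, abs_of_pos ht]
    rw [hnt]
    have hc : ‖R1.comp (ΔA.comp R2)‖ ≤ (C1 / (1 + t)) * (ε * (C2 / (1 + t))) := by
      calc ‖R1.comp (ΔA.comp R2)‖ ≤ ‖R1‖ * ‖ΔA.comp R2‖ :=
            ContinuousLinearMap.opNorm_comp_le _ _
        _ ≤ ‖R1‖ * (‖ΔA‖ * ‖R2‖) :=
            mul_le_mul_of_nonneg_left (ContinuousLinearMap.opNorm_comp_le _ _)
              (norm_nonneg _)
        _ ≤ (C1 / (1 + t)) * (ε * (C2 / (1 + t))) :=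
            mul_le_mul hR1 (mul_le_mul hΔAop hR2 (norm_nonneg _) hε0)
              (mul_nonneg (norm_nonneg _) (norm_nonneg _)) (by positivity)
    have heq : t * ((C1 / (1 + t)) * (ε * (C2 / (1 + t)))) =
        (C1 * ε * C2) * (t / ((1 + t) ^ 2)) := by
      field_simp
    have h2 : t / ((1 + t) ^ 2) ≤ (1 + t)⁻¹ := by
      rw [inv_eq_one_div, div_le_div_iff₀ (by positivity) h1t]
      nlinarith
    calc t * ‖R1.comp (ΔA.comp R2)‖ ≤ t * ((C1 / (1 + t)) * (ε * (C2 / (1 + t)))) :=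
          mul_le_mul_of_nonneg_left hc ht.le
      _ = (C1 * ε * C2) * (t / ((1 + t) ^ 2)) := heq
      _ ≤ (C1 * ε * C2) * (1 + t)⁻¹ :=
          mul_le_mul_of_nonneg_left h2 (by positivity)
  set M' := M / (1 - M * ε) with hM'def
  have hM'0 : 0 ≤ M' := by positivity
  have hRA'b2 : ∀ t ∈ Ioi (0:ℝ), ‖RA' t‖ ≤ M' / (1 + t) := by
    intro t ht
    refine (hRA'b t ht).trans (le_of_eq ?_)
    rw [hM'def]
    field_simp
  -- integrability
  have hfint : Integrable (fun t : ℝ => (t : ℂ) • ((RA' t).comp (ΔA.comp (RA t)))) μ := by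
    refine Integrable.mono' (hμ.const_mul (M' * ε * M)) hfm ?_
    filter_upwards [hae] with t ht
    have ht0 : (0:ℝ) < t := ht
    exact hnorm _ _ t M' M ht0 (by linarith) hM'0 hM0.le (hRA'b2 t ht) (hRAb t ht)
  have hgint : Integrable (fun t : ℝ => (t : ℂ) • ((RA t).comp (ΔA.comp (RA t)))) μ := by
    refine Integrable.mono' (hμ.const_mul (M * ε * M)) hgm ?_
    filter_upwards [hae] with t ht
    have ht0 : (0:ℝ) < t := ht
    exact hnorm _ _ t M M ht0 (by linarith) hM0.le hM0.le (hRAb t ht) (hRAb t ht)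
  have hsplit : (∫ t, (t : ℂ) • ((RA' t).comp (ΔA.comp (RA t))) ∂μ) -
      (∫ t, (t : ℂ) • ((RA t).comp (ΔA.comp (RA t))) ∂μ) =
      ∫ t, ((t : ℂ) • ((RA' t).comp (ΔA.comp (RA t))) -
        (t : ℂ) • ((RA t).comp (ΔA.comp (RA t)))) ∂μ :=
    (integral_sub hfint hgint).symm
  set K := M ^ 3 * ε ^ 2 / (1 - M * ε) with hKdef
  have hK0 : 0 ≤ K := by positivity
  have htmeas : AEStronglyMeasurable (fun t : ℝ => t / (1 + t) ^ 3) μ :=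
    (measurable_id.div ((measurable_const.add measurable_id).pow_const 3)).aestronglyMeasurable
  have htint : Integrable (fun t : ℝ => t / (1 + t) ^ 3) μ := by
    refine Integrable.mono' hμ htmeas ?_
    filter_upwards [hae] with t ht
    have ht0 : (0:ℝ) < t := ht
    have h1t : (0:ℝ) < 1 + t := by linarith
    rw [Real.norm_eq_abs, abs_of_nonneg (by positivity)]
    rw [div_le_iff₀ (by positivity), inv_mul_eq_div, le_div_iff₀ h1t]
    nlinarith [mul_pos h1t (show (0:ℝ) < 1 + t + t ^ 2 by nlinarith [sq_nonneg t])]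
  have hkey : ∀ᵐ (t : ℝ) ∂μ, I.Mem ((t : ℂ) • ((RA' t).comp (ΔA.comp (RA t))) -
      (t : ℂ) • ((RA t).comp (ΔA.comp (RA t)))) ∧
      I.inorm ((t : ℂ) • ((RA' t).comp (ΔA.comp (RA t))) -
      (t : ℂ) • ((RA t).comp (ΔA.comp (RA t)))) ≤ K * (t / (1 + t) ^ 3) := by
    filter_upwards [hae] with t ht
    have ht0 : (0:ℝ) < t := ht
    have h1t : (0:ℝ) < 1 + t := by linarith
    have hid := res_id2 (hRA t ht0.le) (hRA' t ht0.le)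
    have hdiff : (t : ℂ) • ((RA' t).comp (ΔA.comp (RA t))) -
        (t : ℂ) • ((RA t).comp (ΔA.comp (RA t))) =
        (t : ℂ) • (((RA' t).comp (ΔA.comp (RA t))).comp (ΔA.comp (RA t))) := by
      conv_lhs => rw [hid]
      rw [ContinuousLinearMap.add_comp, smul_add]
      abel
    rw [hdiff]
    constructor
    · exact I.smul_mem _ (I.comp_mem _ _ hΔA)
    · rw [I.inorm_smul]
      have hnt : ‖(t : ℂ)‖ = t := by
        rw [Complex.norm_real, Real.norm_eq_abs, abs_of_pos ht0]
      rw [hnt]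
      have hE : ‖(RA' t).comp (ΔA.comp (RA t))‖ ≤ (M' / (1 + t)) * (ε * (M / (1 + t))) := by
        calc ‖(RA' t).comp (ΔA.comp (RA t))‖ ≤ ‖RA' t‖ * ‖ΔA.comp (RA t)‖ :=
              ContinuousLinearMap.opNorm_comp_le _ _
          _ ≤ ‖RA' t‖ * (‖ΔA‖ * ‖RA t‖) :=
              mul_le_mul_of_nonneg_left (ContinuousLinearMap.opNorm_comp_le _ _)
                (norm_nonneg _)
          _ ≤ (M' / (1 + t)) * (ε * (M / (1 + t))) :=
              mul_le_mul (hRA'b2 t ht)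
                (mul_le_mul hΔAop (hRAb t ht) (norm_nonneg _) hε0)
                (mul_nonneg (norm_nonneg _) (norm_nonneg _)) (by positivity)
      have hI : I.inorm (((RA' t).comp (ΔA.comp (RA t))).comp (ΔA.comp (RA t))) ≤
          ((M' / (1 + t)) * (ε * (M / (1 + t)))) * ε * (M / (1 + t)) := by
        refine (I.inorm_comp_le _ _ _ hΔA).trans ?_
        exact mul_le_mul (mul_le_mul_of_nonneg_right hE hε0)
          (hRAb t ht) (norm_nonneg _)
          (mul_nonneg
            (mul_nonneg (div_nonneg hM'0 (by linarith))
              (mul_nonneg hε0 (div_nonneg hM0.le (by linarith)))) hε0)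
      calc t * I.inorm (((RA' t).comp (ΔA.comp (RA t))).comp (ΔA.comp (RA t))) ≤
            t * (((M' / (1 + t)) * (ε * (M / (1 + t)))) * ε * (M / (1 + t))) :=
          mul_le_mul_of_nonneg_left hI ht0.le
        _ = K * (t / (1 + t) ^ 3) := by
            rw [hKdef, hM'def]; field_simp
  rw [hsplit]
  have hmain := I.integral_mem μ _ _ (htint.const_mul K) hkey (hfint.sub hgint)
  refine hmain.2.trans ?_
  rw [integral_const_mul]
  have hJ : 0 ≤ ∫ t, t / (1 + t) ^ 3 ∂μ := by
    apply integral_nonneg_of_ae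
    filter_upwards [hae] with t ht
    have ht0 : (0:ℝ) < t := ht
    positivity
  have : K * ∫ t, t / (1 + t) ^ 3 ∂μ ≤ 2 * (K * ∫ t, t / (1 + t) ^ 3 ∂μ) := by
    nlinarith [mul_nonneg hK0 hJ]
  refine this.trans (le_of_eq ?_)
  rw [hKdef]
  ring
end

section
/- Let $A$ be a negative operator on Banach space $X$, $\mu$ the representing measure of a negative complete Bernstein function $\varphi$, and $\mathcal{C}$ the set of negative operators of the form $A + W$ with $W$ bounded. Then the map $A' \mapsto \varphi^{\nabla}_{A'}$, where $\varphi^{\nabla}_{A'}(B) = \int_0^\infty R(t,A')BR(t,A')\,t\,d\mu(t)$, is continuous from $\mathcal{C}$ (with metric $\|A'-A''\|$) to $\mathcal{L}(\mathcal{L}(X))$: specifically, if $\|A'-A\| < \varepsilon/(2M_A)$ for some $\varepsilon \in (0,1)$, then $\|\varphi^{\nabla}_{A'} - \varphi^{\nabla}_A\| \le 4M_A^3 \left(\int_0^\infty \frac{t\,d\mu(t)}{(1+t)^3}\right)\varepsilon$. -/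
open MeasureTheory Set

variable {X : Type*} [NormedAddCommGroup X] [NormedSpace ℂ X] [CompleteSpace X]

set_option linter.unusedSectionVars false

lemma res_first {A : X →ₗ.[ℂ] X} {s t : ℝ} {Rs Rt : X →L[ℂ] X}
    (hs : IsResolvent A s Rs) (ht : IsResolvent A t Rt) (y : X) :
    Rs y - Rt y = ((t : ℂ) - (s : ℂ)) • Rt (Rs y) := by
  have h1 := ht.left_inv ⟨Rs y, hs.mem y⟩
  have h2 := hs.right_inv y
  have harg : (t : ℂ) • (Rs y) - A ⟨Rs y, hs.mem y⟩
      = ((t : ℂ) - (s : ℂ)) • (Rs y) + ((s : ℂ) • (Rs y) - A ⟨Rs y, hs.mem y⟩) := by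
    module
  rw [harg, h2] at h1
  simp only [map_add, _root_.map_smul] at h1
  exact sub_eq_iff_eq_add.mpr h1.symm

lemma res_second {A : X →ₗ.[ℂ] X} {W : X →L[ℂ] X} {t : ℝ} {R R' : X →L[ℂ] X}
    (hR : IsResolvent A t R) (hR' : IsResolvent (pAdd A W) t R') (x : X) :
    R' x = R x + R' (W (R x)) := by
  have hmem : R x ∈ (pAdd A W).domain := hR.mem x
  have h1 := hR'.left_inv ⟨R x, hmem⟩
  have h2 := hR.right_inv x
  have hval : (pAdd A W) ⟨R x, hmem⟩ = A ⟨R x, hR.mem x⟩ + W (R x) := rfl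
  have harg : (t : ℂ) • (R x) - (pAdd A W) ⟨R x, hmem⟩
      = ((t : ℂ) • (R x) - A ⟨R x, hR.mem x⟩) - W (R x) := by
    rw [hval]; abel
  rw [harg, h2, map_sub] at h1
  exact sub_eq_iff_eq_add.mp h1

lemma res_diff_norm {A : X →ₗ.[ℂ] X} {s t : ℝ} {Rs Rt : X →L[ℂ] X}
    (hs : IsResolvent A s Rs) (ht : IsResolvent A t Rt) :
    ‖Rs - Rt‖ ≤ |t - s| * (‖Rt‖ * ‖Rs‖) := by
  apply ContinuousLinearMap.opNorm_le_bound _ (by positivity)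
  intro y
  have h := res_first hs ht y
  calc ‖(Rs - Rt) y‖ = ‖((t : ℂ) - (s : ℂ)) • Rt (Rs y)‖ := by
        rw [ContinuousLinearMap.sub_apply, h]
    _ = |t - s| * ‖Rt (Rs y)‖ := by
        rw [norm_smul, ← Complex.ofReal_sub, Complex.norm_real, Real.norm_eq_abs]
    _ ≤ |t - s| * (‖Rt‖ * (‖Rs‖ * ‖y‖)) := by
        gcongr
        exact (Rt.le_opNorm _).trans (by gcongr; exact Rs.le_opNorm y)
    _ = |t - s| * (‖Rt‖ * ‖Rs‖) * ‖y‖ := by ring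

set_option maxHeartbeats 1000000 in
/-- Theorem 1, part 1(b): on an equivalence class of negative operators (differing by bounded
operators, with metric `‖A' - A‖`), the map `A' ↦ φ^∇_{A'}`, where
`φ^∇_{A'}(B) = ∫₀^∞ R(t,A') B R(t,A') t dμ(t)`, is continuous into `L(L(X))`: if
`‖A' - A‖ < ε/(2M_A)` with `ε ∈ (0,1)` then
`‖φ^∇_{A'} - φ^∇_A‖ ≤ 4M_A³ (∫ t/(1+t)³ dμ(t)) ε`. -/
theorem transformer_continuity
    (A : X →ₗ.[ℂ] X)
    (hAclosed : IsClosed (A.graph : Set (X × X)))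
    (hAdense : Dense (A.domain : Set X))
    (RA : ℝ → (X →L[ℂ] X))
    (hRA : ∀ t ≥ (0 : ℝ), IsResolvent A t (RA t))
    (M : ℝ) (hM : IsLUB ((fun t => (1 + t) * ‖RA t‖) '' Ioi (0 : ℝ)) M)
    (μ : Measure ℝ) (hsupp : μ (Iic (0 : ℝ)) = 0)
    (hμ : Integrable (fun t => (1 + t)⁻¹) μ)
    (W : X →L[ℂ] X)    -- `A' = A + W`, so that `‖A' - A‖ = ‖W‖`
    (RA' : ℝ → (X →L[ℂ] X))
    (hRA' : ∀ t ≥ (0 : ℝ), IsResolvent (pAdd A W) t (RA' t))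
    (ε : ℝ) (hε : ε ∈ Ioo (0 : ℝ) 1) (hW : ‖W‖ < ε / (2 * M)) :
    ∀ B : X →L[ℂ] X,
      ‖(∫ t, (t : ℂ) • ((RA' t).comp (B.comp (RA' t))) ∂μ) -
          ∫ t, (t : ℂ) • ((RA t).comp (B.comp (RA t))) ∂μ‖ ≤
        4 * M ^ 3 * (∫ t, t / (1 + t) ^ 3 ∂μ) * ε * ‖B‖ := by
  intro B
  obtain ⟨hε1, hε2⟩ := hε
  -- M > 0
  have hMpos : 0 < M := by
    have h1 : 0 < ε / (2 * M) := lt_of_le_of_lt (norm_nonneg W) hW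
    rcases div_pos_iff.mp h1 with ⟨_, h⟩ | ⟨h, _⟩
    · linarith
    · linarith
  have hub : ∀ t, 0 < t → (1 + t) * ‖RA t‖ ≤ M := fun t ht => hM.1 ⟨t, ht, rfl⟩
  have hRAle : ∀ t, 0 < t → ‖RA t‖ ≤ M / (1 + t) := by
    intro t ht
    rw [le_div_iff₀ (by linarith), mul_comm]
    exact hub t ht
  have hRAleM : ∀ t, 0 < t → ‖RA t‖ ≤ M := by
    intro t ht
    have h := hub t ht
    nlinarith [norm_nonneg (RA t)]
  have hWM : ‖W‖ * (2 * M) ≤ ε := by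
    have := (lt_div_iff₀ (by linarith : (0:ℝ) < 2 * M)).mp hW
    linarith
  -- second resolvent identity, operator form
  have hdiffop : ∀ t, 0 < t → RA' t - RA t = (RA' t).comp (W.comp (RA t)) := by
    intro t ht
    ext x
    have h := res_second (hRA t ht.le) (hRA' t ht.le) x
    simp only [ContinuousLinearMap.sub_apply, ContinuousLinearMap.comp_apply]
    rw [h]; abel
  -- norm bound for RA'
  have hRA'le : ∀ t, 0 < t → ‖RA' t‖ ≤ 2 * M / (1 + t) := by
    intro t ht
    have heq : RA' t = RA t + (RA' t).comp (W.comp (RA t)) := by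
      rw [← hdiffop t ht]; abel
    have h1 : ‖RA' t‖ ≤ ‖RA t‖ + ‖RA' t‖ * (‖W‖ * ‖RA t‖) := by
      calc ‖RA' t‖ = ‖RA t + (RA' t).comp (W.comp (RA t))‖ := by rw [← heq]
        _ ≤ ‖RA t‖ + ‖(RA' t).comp (W.comp (RA t))‖ := norm_add_le _ _
        _ ≤ ‖RA t‖ + ‖RA' t‖ * (‖W‖ * ‖RA t‖) := by
            gcongr
            exact (ContinuousLinearMap.opNorm_comp_le _ _).trans
              (by gcongr; exact ContinuousLinearMap.opNorm_comp_le _ _)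
    have hwa : ‖W‖ * ‖RA t‖ ≤ 1 / 2 := by
      have h2 := hRAleM t ht
      nlinarith [norm_nonneg W, norm_nonneg (RA t)]
    have h3 : ‖RA t‖ ≤ M / (1 + t) := hRAle t ht
    have h4 : (2:ℝ) * M / (1 + t) = 2 * (M / (1 + t)) := by ring
    rw [h4]
    nlinarith [norm_nonneg (RA' t), mul_le_mul_of_nonneg_left hwa (norm_nonneg (RA' t))]
  have hRA'leM : ∀ t, 0 < t → ‖RA' t‖ ≤ 2 * M := by
    intro t ht
    refine (hRA'le t ht).trans ?_
    rw [div_le_iff₀ (by linarith)]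
    nlinarith
  -- M ≥ 1
  have hMM : M ≤ M ^ 2 := by
    apply hM.2
    rintro x ⟨t, ht, rfl⟩
    rw [mem_Ioi] at ht
    simp only
    apply le_of_forall_gt_imp_ge_of_dense
    intro c hc
    set δ := c - M ^ 2 with hδdef
    have hδ : 0 < δ := sub_pos.mpr hc
    set s := max t ((1 + t) * M / δ) with hs
    have hst : t ≤ s := le_max_left _ _
    have hs0 : 0 < s := lt_of_lt_of_le ht hst
    have hd := res_diff_norm (hRA t ht.le) (hRA s hs0.le)
    have htri : ‖RA t‖ - ‖RA s‖ ≤ ‖RA t - RA s‖ := norm_sub_norm_le _ _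
    have habs : |s - t| = s - t := abs_of_nonneg (by linarith)
    rw [habs] at hd
    have h1 : (1 + t) * ‖RA s‖ ≤ δ := by
      have hsge : (1 + t) * M / δ ≤ s := le_max_right _ _
      have h2 : ‖RA s‖ ≤ M / (1 + s) := hRAle s hs0
      have h3 : (1 + t) * M ≤ δ * (1 + s) := by
        have := (div_le_iff₀ hδ).mp hsge
        nlinarith
      calc (1 + t) * ‖RA s‖ ≤ (1 + t) * (M / (1 + s)) :=
            mul_le_mul_of_nonneg_left h2 (by linarith)
        _ = ((1 + t) * M) / (1 + s) := by ring
        _ ≤ δ := by rw [div_le_iff₀ (by linarith)]; linarith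
    have h2 : (‖RA t‖ * (1 + t)) * (‖RA s‖ * (s - t)) ≤ M * M := by
      apply mul_le_mul
      · rw [mul_comm]; exact hub t ht
      · calc ‖RA s‖ * (s - t) ≤ ‖RA s‖ * (1 + s) :=
              mul_le_mul_of_nonneg_left (by linarith) (norm_nonneg _)
          _ ≤ M := by rw [mul_comm]; exact hub s hs0
      · exact mul_nonneg (norm_nonneg _) (by linarith)
      · nlinarith
    have hX : ‖RA t‖ ≤ ‖RA s‖ + (s - t) * (‖RA s‖ * ‖RA t‖) := by linarith
    have hXX := mul_le_mul_of_nonneg_left hX (show (0:ℝ) ≤ 1 + t by linarith)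
    have : (1 + t) * ‖RA t‖ ≤ M ^ 2 + δ := by nlinarith
    linarith [this, show M ^ 2 + δ = c by simp [hδdef]]
  have hM1 : 1 ≤ M := by nlinarith
  -- pointwise key estimate
  have hkey : ∀ t : ℝ, 0 < t →
      ‖(t : ℂ) • ((RA' t).comp (B.comp (RA' t))) - (t : ℂ) • ((RA t).comp (B.comp (RA t)))‖
        ≤ (4 * M ^ 3 * ε * ‖B‖) * (t / (1 + t) ^ 3) := by
    intro t ht
    have hu0 : (0:ℝ) < 1 + t := by linarith
    have ha : ‖RA t‖ * (1 + t) ≤ M := by rw [mul_comm]; exact hub t ht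
    have hb : ‖RA' t‖ * (1 + t) ≤ 2 * M := by
      rw [← le_div_iff₀ hu0]; exact hRA'le t ht
    have hdle : ‖RA' t - RA t‖ ≤ ‖RA' t‖ * (‖W‖ * ‖RA t‖) := by
      rw [hdiffop t ht]
      exact (ContinuousLinearMap.opNorm_comp_le _ _).trans
        (by gcongr; exact ContinuousLinearMap.opNorm_comp_le _ _)
    have hd2 : ‖RA' t - RA t‖ * (1 + t) ^ 2 ≤ M * ε := by
      have h1 := mul_le_mul_of_nonneg_right hdle (sq_nonneg (1 + t))
      have h2 : (‖RA' t‖ * (1 + t)) * (‖RA t‖ * (1 + t)) ≤ 2 * M * M :=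
        mul_le_mul hb ha (by positivity) (by linarith)
      have h3 := mul_le_mul_of_nonneg_left h2 (norm_nonneg W)
      have h4 := mul_le_mul_of_nonneg_right hWM hMpos.le
      nlinarith
    have hsplit : (RA' t).comp (B.comp (RA' t)) - (RA t).comp (B.comp (RA t))
        = (RA' t - RA t).comp (B.comp (RA' t)) + (RA t).comp (B.comp (RA' t - RA t)) := by
      ext x
      simp only [ContinuousLinearMap.sub_apply, ContinuousLinearMap.add_apply,
        ContinuousLinearMap.comp_apply, map_sub]
      abel
    have hDnorm : ‖(RA' t).comp (B.comp (RA' t)) - (RA t).comp (B.comp (RA t))‖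
        ≤ ‖RA' t - RA t‖ * (‖B‖ * ‖RA' t‖) + ‖RA t‖ * (‖B‖ * ‖RA' t - RA t‖) := by
      rw [hsplit]
      refine (norm_add_le _ _).trans (add_le_add ?_ ?_) <;>
        exact (ContinuousLinearMap.opNorm_comp_le _ _).trans
          (by gcongr; exact ContinuousLinearMap.opNorm_comp_le _ _)
    have hpoly : (‖RA' t - RA t‖ * (‖B‖ * ‖RA' t‖) + ‖RA t‖ * (‖B‖ * ‖RA' t - RA t‖))
        * (1 + t) ^ 3 ≤ 4 * M ^ 3 * ε * ‖B‖ := by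
      have h5 : (‖RA' t - RA t‖ * (1 + t) ^ 2) * (‖RA' t‖ * (1 + t)) ≤ (M * ε) * (2 * M) :=
        mul_le_mul hd2 hb (mul_nonneg (norm_nonneg _) hu0.le) (mul_nonneg hMpos.le hε1.le)
      have h6 : (‖RA' t - RA t‖ * (1 + t) ^ 2) * (‖RA t‖ * (1 + t)) ≤ (M * ε) * M :=
        mul_le_mul hd2 ha (mul_nonneg (norm_nonneg _) hu0.le) (mul_nonneg hMpos.le hε1.le)
      have h7 := mul_le_mul_of_nonneg_left h5 (norm_nonneg B)
      have h8 := mul_le_mul_of_nonneg_left h6 (norm_nonneg B)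
      have h9 : 0 ≤ M ^ 2 * ε * ‖B‖ * (M - 1) :=
        mul_nonneg (mul_nonneg (mul_nonneg (sq_nonneg M) hε1.le) (norm_nonneg B)) (by linarith)
      have h10 : 0 ≤ M ^ 3 * ε * ‖B‖ :=
        mul_nonneg (mul_nonneg (pow_nonneg hMpos.le 3) hε1.le) (norm_nonneg B)
      nlinarith
    have hnt : ‖(t : ℂ)‖ = t := by
      rw [Complex.norm_real, Real.norm_eq_abs, abs_of_pos ht]
    rw [← smul_sub, norm_smul, hnt]
    have hdiv : ‖(RA' t).comp (B.comp (RA' t)) - (RA t).comp (B.comp (RA t))‖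
        ≤ 4 * M ^ 3 * ε * ‖B‖ / (1 + t) ^ 3 := by
      rw [le_div_iff₀ (by positivity)]
      exact le_trans (mul_le_mul_of_nonneg_right hDnorm (by positivity)) hpoly
    calc t * ‖(RA' t).comp (B.comp (RA' t)) - (RA t).comp (B.comp (RA t))‖
        ≤ t * (4 * M ^ 3 * ε * ‖B‖ / (1 + t) ^ 3) :=
          mul_le_mul_of_nonneg_left hdiv ht.le
      _ = (4 * M ^ 3 * ε * ‖B‖) * (t / (1 + t) ^ 3) := by ring
  -- a.e. positivity
  have hae : ∀ᵐ t ∂μ, 0 < t := by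
    have hset : {t : ℝ | ¬ 0 < t} = Iic 0 := by ext x; simp [not_lt]
    rw [ae_iff, hset]
    exact hsupp
  -- continuity of the resolvents on (0,∞)
  have hRAc : ContinuousOn RA (Ioi (0:ℝ)) := by
    apply LipschitzOnWith.continuousOn (K := Real.toNNReal (M * M))
    apply LipschitzOnWith.of_dist_le_mul
    intro s hs t ht
    rw [mem_Ioi] at hs ht
    rw [dist_eq_norm, Real.coe_toNNReal _ (by positivity), Real.dist_eq, abs_sub_comm]
    refine (res_diff_norm (hRA s hs.le) (hRA t ht.le)).trans ?_
    calc |t - s| * (‖RA t‖ * ‖RA s‖) ≤ |t - s| * (M * M) := by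
          gcongr
          · exact hRAleM t ht
          · exact hRAleM s hs
      _ = M * M * |t - s| := by ring
  have hRA'c : ContinuousOn RA' (Ioi (0:ℝ)) := by
    apply LipschitzOnWith.continuousOn (K := Real.toNNReal ((2 * M) * (2 * M)))
    apply LipschitzOnWith.of_dist_le_mul
    intro s hs t ht
    rw [mem_Ioi] at hs ht
    rw [dist_eq_norm, Real.coe_toNNReal _ (by positivity), Real.dist_eq, abs_sub_comm]
    refine (res_diff_norm (hRA' s hs.le) (hRA' t ht.le)).trans ?_
    calc |t - s| * (‖RA' t‖ * ‖RA' s‖) ≤ |t - s| * ((2 * M) * (2 * M)) := by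
          gcongr
          · exact hRA'leM t ht
          · exact hRA'leM s hs
      _ = (2 * M) * (2 * M) * |t - s| := by ring
  haveI : SecondCountableTopologyEither ℝ (X →L[ℂ] X) := ⟨Or.inl inferInstance⟩
  have hrestrict : μ.restrict (Ioi (0:ℝ)) = μ :=
    Measure.restrict_eq_self_of_ae_mem (hae.mono fun t ht => ht)
  -- measurability and integrability
  have hmf : AEStronglyMeasurable (fun t : ℝ => (t : ℂ) • ((RA t).comp (B.comp (RA t)))) μ := by
    have hc : ContinuousOn (fun t : ℝ => (t : ℂ) • ((RA t).comp (B.comp (RA t)))) (Ioi 0) :=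
      (Complex.continuous_ofReal.continuousOn).smul
        (hRAc.clm_comp (continuousOn_const.clm_comp hRAc))
    have h := hc.aestronglyMeasurable (μ := μ) measurableSet_Ioi
    rwa [hrestrict] at h
  have hmf' : AEStronglyMeasurable (fun t : ℝ => (t : ℂ) • ((RA' t).comp (B.comp (RA' t)))) μ := by
    have hc : ContinuousOn (fun t : ℝ => (t : ℂ) • ((RA' t).comp (B.comp (RA' t)))) (Ioi 0) :=
      (Complex.continuous_ofReal.continuousOn).smul
        (hRA'c.clm_comp (continuousOn_const.clm_comp hRA'c))
    have h := hc.aestronglyMeasurable (μ := μ) measurableSet_Ioi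
    rwa [hrestrict] at h
  have hnb : ∀ (t : ℝ), 0 < t → ∀ (P Q : X →L[ℂ] X),
      ‖(t : ℂ) • (P.comp (B.comp Q))‖ ≤ t * (‖P‖ * (‖B‖ * ‖Q‖)) := by
    intro t ht P Q
    rw [norm_smul ((t:ℝ) : ℂ) (P.comp (B.comp Q)), Complex.norm_real, Real.norm_eq_abs, abs_of_pos ht]
    exact mul_le_mul_of_nonneg_left
      ((ContinuousLinearMap.opNorm_comp_le _ _).trans
        (by gcongr; exact ContinuousLinearMap.opNorm_comp_le _ _)) ht.le
  have hIf : Integrable (fun t : ℝ => (t : ℂ) • ((RA t).comp (B.comp (RA t)))) μ := by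
    apply Integrable.mono' (hμ.const_mul (M ^ 2 * ‖B‖)) hmf
    filter_upwards [hae] with t ht
    refine (hnb t ht _ _).trans ?_
    have hu0 : (0:ℝ) < 1 + t := by linarith
    have ha : ‖RA t‖ * (1 + t) ≤ M := by rw [mul_comm]; exact hub t ht
    rw [show M ^ 2 * ‖B‖ * (1 + t)⁻¹ = (M ^ 2 * ‖B‖) / (1 + t) by ring,
      le_div_iff₀ hu0]
    have h1 : (‖RA t‖ * (1 + t)) * (‖RA t‖ * (1 + t)) ≤ M * M :=
      mul_le_mul ha ha (by positivity) hMpos.le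
    have h2 := mul_le_mul_of_nonneg_left h1 (norm_nonneg B)
    nlinarith [mul_nonneg (mul_nonneg (mul_nonneg (norm_nonneg B) (norm_nonneg (RA t)))
      (norm_nonneg (RA t))) hu0.le]
  have hIf' : Integrable (fun t : ℝ => (t : ℂ) • ((RA' t).comp (B.comp (RA' t)))) μ := by
    apply Integrable.mono' (hμ.const_mul (4 * M ^ 2 * ‖B‖)) hmf'
    filter_upwards [hae] with t ht
    refine (hnb t ht _ _).trans ?_
    have hu0 : (0:ℝ) < 1 + t := by linarith
    have hb : ‖RA' t‖ * (1 + t) ≤ 2 * M := by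
      rw [← le_div_iff₀ hu0]; exact hRA'le t ht
    rw [show 4 * M ^ 2 * ‖B‖ * (1 + t)⁻¹ = (4 * M ^ 2 * ‖B‖) / (1 + t) by ring,
      le_div_iff₀ hu0]
    have h1 : (‖RA' t‖ * (1 + t)) * (‖RA' t‖ * (1 + t)) ≤ (2 * M) * (2 * M) :=
      mul_le_mul hb hb (by positivity) (by linarith)
    have h2 := mul_le_mul_of_nonneg_left h1 (norm_nonneg B)
    nlinarith [mul_nonneg (mul_nonneg (mul_nonneg (norm_nonneg B) (norm_nonneg (RA' t)))
      (norm_nonneg (RA' t))) hu0.le]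
  have hIg : Integrable (fun t : ℝ => t / (1 + t) ^ 3) μ := by
    apply Integrable.mono' hμ
    · exact (measurable_id.div ((measurable_const.add measurable_id).pow_const 3)).aestronglyMeasurable
    · filter_upwards [hae] with t ht
      have hu0 : (0:ℝ) < 1 + t := by linarith
      rw [Real.norm_eq_abs, abs_of_nonneg (by positivity)]
      rw [div_le_iff₀ (by positivity)]
      have h1 : (1 + t)⁻¹ * (1 + t) ^ 3 = (1 + t) ^ 2 := by field_simp
      rw [h1]
      nlinarith
  -- assemble
  rw [← integral_sub hIf' hIf]
  have hbound : ∀ᵐ (t : ℝ) ∂μ, ‖(t : ℂ) • ((RA' t).comp (B.comp (RA' t)))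
      - (t : ℂ) • ((RA t).comp (B.comp (RA t)))‖
      ≤ (4 * M ^ 3 * ε * ‖B‖) * (t / (1 + t) ^ 3) := hae.mono fun t ht => hkey t ht
  refine (norm_integral_le_of_norm_le (hIg.const_mul (4 * M ^ 3 * ε * ‖B‖)) hbound).trans ?_
  rw [integral_const_mul]
  exact le_of_eq (by ring)
end

section
/- Let $A$ be a negative operator on a Banach space $X$, $V \in \mathcal{I}$ a symmetrically normed operator ideal, and $\mu$ the representing measure of a negative complete Bernstein function $\varphi$. Then for $z \in \mathbb{C}$ with $|z| < 1/(\|V\|_{\mathcal{I}} M_A)$, the function $z \mapsto \varphi(A+zV) - \varphi(A)$ is analytic with values in $\mathcal{I}$ and admits the power series expansion $\varphi(A+zV)-\varphi(A) = \sum_{n=1}^\infty z^n C_n$ converging absolutely in the $\mathcal{I}$-norm, where $C_n = \int_0^\infty (R(t,A)V)^n R(t,A)\, t\, d\mu(t)$. -/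
/-! The second resolvent identity `R(t,A+zV) = R(t,A) + R(t,A) (zV) R(t,A+zV)` gives, when
`‖z‖ ‖V‖_I M_A < 1`, the Neumann expansion `R(t,A+zV) (zV) R(t,A) = ∑ zⁿ⁺¹ (R(t,A)V)ⁿ⁺¹ R(t,A)`.
Writing `(R V)ⁿ⁺¹ R = R V ((R V)ⁿ R)` and using `‖R(t,A)‖ ≤ M_A/(1+t)`, the `n`-th term times `t`
has ideal norm at most `(‖z‖ ‖V‖_I M_A)ⁿ⁺¹ M_A (1+t)⁻¹`: a summable, `μ`-integrable majorant. So
the series may be integrated termwise, and the resulting power series is analytic on its disc. -/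

open MeasureTheory Set

variable {X : Type*} [NormedAddCommGroup X] [NormedSpace ℂ X] [CompleteSpace X]

namespace IsResolvent

variable {A : X →ₗ.[ℂ] X} {t : ℝ} {R S W : X →L[ℂ] X}

omit [CompleteSpace X] in
theorem sub_eq_smul_mul {s : ℝ} (hR : IsResolvent A s R) (hS : IsResolvent A t S) :
    S - R = ((s : ℂ) - t) • (R * S) := by
  ext x
  have hSx : (s : ℂ) • S x - A ⟨S x, hS.mem x⟩ = x + ((s : ℂ) - t) • S x := by
    linear_combination (norm := module) hS.right_inv x
  have h := hR.left_inv ⟨S x, hS.mem x⟩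
  rw [hSx, map_add, map_smul] at h
  simp only [sub_apply, smul_apply, mul_apply_eq_comp] at h ⊢
  linear_combination (norm := module) (-1 : ℂ) • h

omit [CompleteSpace X] in
theorem pAdd_eq_add_mul_mul (hR : IsResolvent A t R) (hS : IsResolvent (pAdd A W) t S) :
    S = R + R * W * S := by
  ext x
  have hSx : (t : ℂ) • S x - A ⟨S x, hS.mem x⟩ = x + W (S x) := by
    have h : (t : ℂ) • S x - (A ⟨S x, hS.mem x⟩ + W (S x)) = x := hS.right_inv x
    linear_combination (norm := module) h
  have h := hR.left_inv ⟨S x, hS.mem x⟩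
  rw [hSx, map_add] at h
  simpa using h.symm

theorem hasSum_pow_succ_mul (hR : IsResolvent A t R) (hS : IsResolvent (pAdd A W) t S)
    (hRW : ‖R * W‖ < 1) : HasSum (fun n : ℕ => (R * W) ^ (n + 1) * R) (S * W * R) := by
  have hS_eq : S = (∑' n : ℕ, (R * W) ^ n) * R := by
    have h : (1 - R * W) * S = R := by
      rw [sub_mul, one_mul, mul_assoc, sub_eq_iff_eq_add, ← mul_assoc]
      exact hR.pAdd_eq_add_mul_mul hS
    calc S = (∑' n : ℕ, (R * W) ^ n) * (1 - R * W) * S := by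
          rw [geom_series_mul_neg _ hRW, one_mul]
      _ = _ := by rw [mul_assoc, h]
  rw [hS_eq]
  simpa only [pow_succ, mul_assoc] using
    (summable_geometric_of_norm_lt_one hRW).hasSum.mul_right (R * W * R)

end IsResolvent

theorem norm_mul_pow_mul_le {𝕜 : Type*} [NormedRing 𝕜] (a b : 𝕜) :
    ∀ n : ℕ, ‖(a * b) ^ n * a‖ ≤ (‖a‖ * ‖b‖) ^ n * ‖a‖
  | 0 => by simp
  | n + 1 => calc
      ‖(a * b) ^ (n + 1) * a‖ = ‖(a * b) * ((a * b) ^ n * a)‖ := by rw [pow_succ', mul_assoc]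
      _ ≤ ‖a * b‖ * ‖(a * b) ^ n * a‖ := norm_mul_le _ _
      _ ≤ (‖a‖ * ‖b‖) * ((‖a‖ * ‖b‖) ^ n * ‖a‖) := by
        gcongr
        · exact norm_mul_le a b
        · exact norm_mul_pow_mul_le a b n
      _ = (‖a‖ * ‖b‖) ^ (n + 1) * ‖a‖ := by ring

theorem le_of_one_add_mul_le {a t M : ℝ} (ha : 0 ≤ a) (ht : 0 ≤ t) (h : (1 + t) * a ≤ M) :
    a ≤ M := by
  nlinarith

theorem mul_mul_pow_succ_mul_le {a c t M : ℝ} (ha : 0 ≤ a) (hc : 0 ≤ c) (ht : 0 ≤ t)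
    (haM : (1 + t) * a ≤ M) (n : ℕ) :
    t * ((a * c) ^ (n + 1) * a) ≤ (c * M) ^ (n + 1) * M * (1 + t)⁻¹ := by
  have hta : t * a ≤ M := by nlinarith
  have haM' : a ≤ M := le_of_one_add_mul_le ha ht haM
  have ha_div : a ≤ M * (1 + t)⁻¹ := by
    rw [← div_eq_mul_inv, le_div_iff₀ (by positivity)]; linarith
  calc t * ((a * c) ^ (n + 1) * a) = (t * a) * (a * c) ^ n * c * a := by ring
    _ ≤ M * (M * c) ^ n * c * (M * (1 + t)⁻¹) := by
        have hM : 0 ≤ M := ha.trans haM'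
        have : 0 ≤ M * (M * c) ^ n * c := by positivity
        gcongr
    _ = (c * M) ^ (n + 1) * M * (1 + t)⁻¹ := by ring

namespace OperatorIdeal

variable (I : OperatorIdeal X) {V : X →L[ℂ] X}

omit [CompleteSpace X] in
theorem pow_succ_mul_eq_comp (R : X →L[ℂ] X) (n : ℕ) :
    (R * V) ^ (n + 1) * R = R.comp (V.comp ((R * V) ^ n * R)) := by
  rw [pow_succ', mul_assoc, mul_assoc]; rfl

omit [CompleteSpace X] in
theorem mem_smul_pow_succ_mul (hV : I.Mem V) (c : ℂ) (R : X →L[ℂ] X) (n : ℕ) :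
    I.Mem (c • ((R * V) ^ (n + 1) * R)) := by
  rw [pow_succ_mul_eq_comp]
  exact I.smul_mem c (I.comp_mem _ _ hV)

omit [CompleteSpace X] in
theorem inorm_pow_succ_mul_le (hV : I.Mem V) (R : X →L[ℂ] X) (n : ℕ) :
    I.inorm ((R * V) ^ (n + 1) * R) ≤ (‖R‖ * I.inorm V) ^ (n + 1) * ‖R‖ := by
  have hV_le := I.opNorm_le_inorm V hV
  have hRV : 0 ≤ ‖R‖ * I.inorm V := mul_nonneg (norm_nonneg R) (I.inorm_nonneg V)
  rw [pow_succ_mul_eq_comp]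
  calc I.inorm (R.comp (V.comp ((R * V) ^ n * R)))
      ≤ ‖R‖ * I.inorm V * ‖(R * V) ^ n * R‖ := I.inorm_comp_le _ _ _ hV
    _ ≤ ‖R‖ * I.inorm V * ((‖R‖ * I.inorm V) ^ n * ‖R‖) := by
        gcongr
        exact (norm_mul_pow_mul_le R V n).trans (by gcongr)
    _ = (‖R‖ * I.inorm V) ^ (n + 1) * ‖R‖ := by ring

omit [CompleteSpace X] in
theorem inorm_smul_pow_succ_mul_le (hV : I.Mem V) {R : X →L[ℂ] X} {t M : ℝ} (ht : 0 ≤ t)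
    (hR : (1 + t) * ‖R‖ ≤ M) (n : ℕ) :
    I.inorm ((t : ℂ) • ((R * V) ^ (n + 1) * R)) ≤ (I.inorm V * M) ^ (n + 1) * M * (1 + t)⁻¹ := by
  rw [I.inorm_smul, Complex.norm_real, Real.norm_of_nonneg ht]
  calc t * I.inorm ((R * V) ^ (n + 1) * R)
      ≤ t * ((‖R‖ * I.inorm V) ^ (n + 1) * ‖R‖) := by gcongr; exact I.inorm_pow_succ_mul_le hV R n
    _ ≤ _ := mul_mul_pow_succ_mul_le (norm_nonneg R) (I.inorm_nonneg V) ht hR n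

end OperatorIdeal

omit [CompleteSpace X] in
theorem IsResolvent.lipschitzOnWith {A : X →ₗ.[ℂ] X} {RA : ℝ → X →L[ℂ] X} {s : Set ℝ} {M : ℝ}
    (hRA : ∀ t ∈ s, IsResolvent A t (RA t)) (hM : ∀ t ∈ s, ‖RA t‖ ≤ M) :
    LipschitzOnWith (M * M).toNNReal RA s := by
  refine LipschitzOnWith.of_dist_le_mul fun u hu t ht => ?_
  have hM0 : 0 ≤ M := (norm_nonneg _).trans (hM u hu)
  rw [Real.coe_toNNReal _ (mul_self_nonneg M), dist_eq_norm,
    (hRA t ht).sub_eq_smul_mul (hRA u hu), norm_smul, ← Complex.ofReal_sub,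
    Complex.norm_real, ← dist_eq_norm, dist_comm, mul_comm]
  gcongr
  exact (norm_mul_le _ _).trans (mul_le_mul (hM t ht) (hM u hu) (norm_nonneg _) hM0)

section Coefficients

variable (I : OperatorIdeal X) {A : X →ₗ.[ℂ] X} {RA : ℝ → X →L[ℂ] X} {M : ℝ}
  {μ : Measure ℝ} {V : X →L[ℂ] X}

omit [CompleteSpace X] in
theorem aestronglyMeasurable_smul_pow_succ_mul (hRA : ∀ t > 0, IsResolvent A t (RA t))
    (hM : ∀ t > 0, (1 + t) * ‖RA t‖ ≤ M) (hμ0 : ∀ᵐ t ∂μ, 0 < t) (V : X →L[ℂ] X) (n : ℕ) :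
    AEStronglyMeasurable (fun t : ℝ => (t : ℂ) • ((RA t * V) ^ (n + 1) * RA t)) μ := by
  have hcont : ContinuousOn RA (Ioi 0) := (IsResolvent.lipschitzOnWith hRA fun t ht =>
    le_of_one_add_mul_le (norm_nonneg _) (le_of_lt ht) (hM t ht)).continuousOn
  have hμ : μ.restrict (Ioi 0) = μ := Measure.restrict_eq_self_of_ae_mem hμ0
  rw [← hμ]
  exact (Complex.continuous_ofReal.continuousOn.smul
    (((hcont.mul continuousOn_const).pow _).mul hcont)).aestronglyMeasurable measurableSet_Ioi

omit [CompleteSpace X] in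
theorem ae_mem_and_inorm_smul_pow_succ_mul_le (hV : I.Mem V)
    (hM : ∀ t > 0, (1 + t) * ‖RA t‖ ≤ M) (hμ0 : ∀ᵐ t ∂μ, 0 < t) (n : ℕ) :
    ∀ᵐ (t : ℝ) ∂μ, I.Mem ((t : ℂ) • ((RA t * V) ^ (n + 1) * RA t)) ∧
      I.inorm ((t : ℂ) • ((RA t * V) ^ (n + 1) * RA t)) ≤
        (I.inorm V * M) ^ (n + 1) * M * (1 + t)⁻¹ := by
  filter_upwards [hμ0] with t ht
  exact ⟨I.mem_smul_pow_succ_mul hV _ _ n, I.inorm_smul_pow_succ_mul_le hV ht.le (hM t ht) n⟩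

omit [CompleteSpace X] in
theorem integrable_smul_pow_succ_mul (hRA : ∀ t > 0, IsResolvent A t (RA t))
    (hM : ∀ t > 0, (1 + t) * ‖RA t‖ ≤ M) (hμ0 : ∀ᵐ t ∂μ, 0 < t)
    (hμ : Integrable (fun t : ℝ => (1 + t)⁻¹) μ) (hV : I.Mem V) (n : ℕ) :
    Integrable (fun t : ℝ => (t : ℂ) • ((RA t * V) ^ (n + 1) * RA t)) μ := by
  refine Integrable.mono' (hμ.const_mul ((I.inorm V * M) ^ (n + 1) * M))
    (aestronglyMeasurable_smul_pow_succ_mul hRA hM hμ0 V n) ?_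
  filter_upwards [ae_mem_and_inorm_smul_pow_succ_mul_le I hV hM hμ0 n] with t ⟨hmem, hle⟩
  exact (I.opNorm_le_inorm _ hmem).trans hle

omit [CompleteSpace X] in
theorem inorm_integral_smul_pow_succ_mul_le (hRA : ∀ t > 0, IsResolvent A t (RA t))
    (hM : ∀ t > 0, (1 + t) * ‖RA t‖ ≤ M) (hμ0 : ∀ᵐ t ∂μ, 0 < t)
    (hμ : Integrable (fun t : ℝ => (1 + t)⁻¹) μ) (hV : I.Mem V) (n : ℕ) :
    I.inorm (∫ t, (t : ℂ) • ((RA t * V) ^ (n + 1) * RA t) ∂μ) ≤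
      (I.inorm V * M) ^ (n + 1) * M * ∫ t, (1 + t)⁻¹ ∂μ := by
  rw [← integral_const_mul]
  exact (I.integral_mem μ _ _ (hμ.const_mul _)
    (ae_mem_and_inorm_smul_pow_succ_mul_le I hV hM hμ0 n)
    (integrable_smul_pow_succ_mul I hRA hM hμ0 hμ hV n)).2

omit [CompleteSpace X] in
theorem norm_mul_smul_lt_one {R : X →L[ℂ] X} {z : ℂ} (hR : ‖R‖ ≤ M)
    (hz : ‖z‖ * (I.inorm V * M) < 1) (hV : I.Mem V) : ‖R * (z • V)‖ < 1 :=
  calc ‖R * (z • V)‖ ≤ ‖R‖ * (‖z‖ * ‖V‖) := by rw [← norm_smul]; exact norm_mul_le _ _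
    _ ≤ M * (‖z‖ * I.inorm V) := by
        have := (norm_nonneg R).trans hR
        gcongr
        exact I.opNorm_le_inorm V hV
    _ = ‖z‖ * (I.inorm V * M) := by ring
    _ < 1 := hz

theorem hasSum_integral_smul_pow_succ_mul (hRA : ∀ t > 0, IsResolvent A t (RA t))
    (hM : ∀ t > 0, (1 + t) * ‖RA t‖ ≤ M) (hμ0 : ∀ᵐ t ∂μ, 0 < t)
    (hμ : Integrable (fun t : ℝ => (1 + t)⁻¹) μ) (hV : I.Mem V) {z : ℂ}
    {Rz : ℝ → X →L[ℂ] X} (hRz : ∀ t > 0, IsResolvent (pAdd A (z • V)) t (Rz t))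
    (hz : ‖z‖ * (I.inorm V * M) < 1) :
    HasSum (fun n : ℕ => z ^ (n + 1) • ∫ t, (t : ℂ) • ((RA t * V) ^ (n + 1) * RA t) ∂μ)
      (∫ t, (t : ℂ) • ((Rz t).comp ((z • V).comp (RA t))) ∂μ) := by
  have hq : 0 ≤ ‖z‖ * (I.inorm V * M) := by
    have hM0 : 0 ≤ M := by nlinarith [hM 1 one_pos, norm_nonneg (RA 1)]
    have := I.inorm_nonneg V
    positivity
  simp_rw [← integral_smul]
  refine hasSum_integral_of_dominated_convergence
    (fun n t => (‖z‖ * (I.inorm V * M)) ^ (n + 1) * (M * (1 + t)⁻¹))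
    (fun n => (aestronglyMeasurable_smul_pow_succ_mul hRA hM hμ0 V n).fun_const_smul _)
    (fun n => ?_) (ae_of_all _ fun t => ?_) ?_ ?_
  · filter_upwards [ae_mem_and_inorm_smul_pow_succ_mul_le I hV hM hμ0 n] with t ⟨hmem, hle⟩
    rw [norm_smul, norm_pow, mul_pow, mul_assoc, ← mul_assoc ((I.inorm V * M) ^ (n + 1))]
    exact mul_le_mul_of_nonneg_left ((I.opNorm_le_inorm _ hmem).trans hle) (by positivity)
  · exact ((summable_nat_add_iff 1).mpr (summable_geometric_of_lt_one hq hz)).mul_right _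
  · simp_rw [tsum_mul_right]
    exact (hμ.const_mul M).const_mul _
  · filter_upwards [hμ0] with t ht
    have h := ((hRA t ht).hasSum_pow_succ_mul (hRz t ht) (norm_mul_smul_lt_one I
      (le_of_one_add_mul_le (norm_nonneg _) ht.le (hM t ht)) hz hV)).const_smul (t : ℂ)
    have hterm (n : ℕ) : (t : ℂ) • ((RA t * (z • V)) ^ (n + 1) * RA t) =
        z ^ (n + 1) • (t : ℂ) • ((RA t * V) ^ (n + 1) * RA t) := by
      rw [mul_smul_comm, smul_pow, smul_mul_assoc, smul_comm]
    simp only [hterm] at h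
    exact h

omit [CompleteSpace X] in
theorem summable_pow_mul_inorm_integral_smul_pow_succ_mul
    (hRA : ∀ t > 0, IsResolvent A t (RA t)) (hM : ∀ t > 0, (1 + t) * ‖RA t‖ ≤ M)
    (hμ0 : ∀ᵐ t ∂μ, 0 < t) (hμ : Integrable (fun t : ℝ => (1 + t)⁻¹) μ) (hV : I.Mem V)
    {r : ℝ} (hr : 0 ≤ r) (hrq : r * (I.inorm V * M) < 1) :
    Summable (fun n : ℕ =>
      r ^ (n + 1) * I.inorm (∫ t, (t : ℂ) • ((RA t * V) ^ (n + 1) * RA t) ∂μ)) := by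
  have hM0 : 0 ≤ M := by nlinarith [hM 1 one_pos, norm_nonneg (RA 1)]
  have hK : 0 ≤ ∫ t, (1 + t)⁻¹ ∂μ :=
    integral_nonneg_of_ae (by filter_upwards [hμ0] with t ht; positivity)
  have hV0 := I.inorm_nonneg V
  refine Summable.of_nonneg_of_le (fun n => mul_nonneg (by positivity) (I.inorm_nonneg _))
    (fun n => ?_) (((summable_nat_add_iff 1).mpr (summable_geometric_of_lt_one
      (by positivity) hrq)).mul_right (M * ∫ t, (1 + t)⁻¹ ∂μ))
  calc r ^ (n + 1) * I.inorm (∫ t, (t : ℂ) • ((RA t * V) ^ (n + 1) * RA t) ∂μ)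
      ≤ r ^ (n + 1) * ((I.inorm V * M) ^ (n + 1) * M * ∫ t, (1 + t)⁻¹ ∂μ) := by
        gcongr
        exact inorm_integral_smul_pow_succ_mul_le I hRA hM hμ0 hμ hV n
    _ = (r * (I.inorm V * M)) ^ (n + 1) * (M * ∫ t, (1 + t)⁻¹ ∂μ) := by ring

end Coefficients

theorem analyticOnNhd_ball_of_hasSum_pow_smul {𝕜 E : Type*} [RCLike 𝕜] [NormedAddCommGroup E]
    [NormedSpace 𝕜 E] [CompleteSpace E] {f : 𝕜 → E} {c : ℕ → E} {r : ℝ}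
    (hf : ∀ z ∈ Metric.ball (0 : 𝕜) r, HasSum (fun n : ℕ => z ^ n • c n) (f z)) :
    AnalyticOnNhd 𝕜 f (Metric.ball 0 r) := by
  let p : FormalMultilinearSeries 𝕜 𝕜 E := fun n =>
    ContinuousMultilinearMap.mkPiRing 𝕜 (Fin n) (c n)
  have hp (n : ℕ) (z : 𝕜) : p n (fun _ => z) = z ^ n • c n := by simp [p]
  rcases le_or_gt r 0 with hr | hr
  · simp [Metric.ball_eq_empty.mpr hr]
  have hrad : ENNReal.ofReal r ≤ p.radius := by
    refine ENNReal.le_of_forall_nnreal_lt fun ρ hρ => p.le_radius_of_tendsto (l := 0) ?_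
    have hρr : ((ρ : ℝ) : 𝕜) ∈ Metric.ball 0 r := by
      simpa using (ENNReal.ofReal_lt_ofReal_iff hr).1 (by simpa using hρ)
    simpa [hp, p, FormalMultilinearSeries.coeff, norm_smul, mul_comm] using
      (hf _ hρr).summable.tendsto_atTop_zero.norm
  have hps : HasFPowerSeriesOnBall f p 0 (ENNReal.ofReal r) :=
    ⟨hrad, ENNReal.ofReal_pos.2 hr, fun {y} hy => by
      simpa [hp] using hf y (by simpa [Metric.eball_ofReal] using hy)⟩
  simpa [Metric.eball_ofReal] using hps.analyticOnNhd

/-- `φ(A+zV) - φ(A)` is represented by `∫ t R(t,A+zV) (zV) R(t,A) dμ(t)`. -/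
theorem power_series_expansion_negative_general
    (I : OperatorIdeal X)
    (A : X →ₗ.[ℂ] X)
    (RA : ℝ → (X →L[ℂ] X))
    (hRA : ∀ t ≥ (0 : ℝ), IsResolvent A t (RA t))
    (M : ℝ) (hM : IsLUB ((fun t => (1 + t) * ‖RA t‖) '' Ioi (0 : ℝ)) M)
    (μ : Measure ℝ) (hsupp : μ (Iic (0 : ℝ)) = 0)
    (hμ : Integrable (fun t => (1 + t)⁻¹) μ)
    (V : X →L[ℂ] X) (hV : I.Mem V)
    (Rz : ℂ → ℝ → (X →L[ℂ] X))
    (hRz : ∀ z : ℂ, ‖z‖ < 1 / (I.inorm V * M) →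
      ∀ t ≥ (0 : ℝ), IsResolvent (pAdd A (z • V)) t (Rz z t)) :
    (∀ z : ℂ, ‖z‖ < 1 / (I.inorm V * M) →
        HasSum (fun n : ℕ => z ^ (n + 1) •
            ∫ t, (t : ℂ) • ((RA t * V) ^ (n + 1) * RA t) ∂μ)
          (∫ t, (t : ℂ) • ((Rz z t).comp ((z • V).comp (RA t))) ∂μ)) ∧
      (∀ z : ℂ, ‖z‖ < 1 / (I.inorm V * M) →
        Summable (fun n : ℕ =>
          ‖z‖ ^ (n + 1) * I.inorm (∫ t, (t : ℂ) • ((RA t * V) ^ (n + 1) * RA t) ∂μ))) ∧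
      AnalyticOnNhd ℂ
        (fun z : ℂ => ∫ t, (t : ℂ) • ((Rz z t).comp ((z • V).comp (RA t))) ∂μ)
        (Metric.ball (0 : ℂ) (1 / (I.inorm V * M))) := by
  have hRA' : ∀ t > 0, IsResolvent A t (RA t) := fun t ht => hRA t ht.le
  have hM' : ∀ t > 0, (1 + t) * ‖RA t‖ ≤ M := fun t ht => hM.1 (mem_image_of_mem _ ht)
  have hμ0 : ∀ᵐ t ∂μ, 0 < t :=
    (measure_eq_zero_iff_ae_notMem.1 hsupp).mono fun t ht => not_le.1 ht
  have hq {z : ℂ} (hz : ‖z‖ < 1 / (I.inorm V * M)) : ‖z‖ * (I.inorm V * M) < 1 :=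
    (lt_div_iff₀ (one_div_pos.mp ((norm_nonneg z).trans_lt hz))).mp hz
  have hsum (z : ℂ) (hz : ‖z‖ < 1 / (I.inorm V * M)) :=
    hasSum_integral_smul_pow_succ_mul I hRA' hM' hμ0 hμ hV (fun t ht => hRz z hz t ht.le) (hq hz)
  refine ⟨hsum, fun z hz => summable_pow_mul_inorm_integral_smul_pow_succ_mul I hRA' hM' hμ0 hμ
    hV (norm_nonneg z) (hq hz), ?_⟩
  refine analyticOnNhd_ball_of_hasSum_pow_smul
    (c := fun n => Nat.casesOn n 0 fun n => ∫ t, (t : ℂ) • ((RA t * V) ^ (n + 1) * RA t) ∂μ)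
    fun z hz => (hasSum_nat_add_iff' 1).mp ?_
  simpa using hsum z (mem_ball_zero_iff.mp hz)

/-- Theorem 2: for a negative operator `A`, `V ∈ I` and a negative complete Bernstein function
with representing measure `μ`, the `I`-valued function `z ↦ φ(A+zV) - φ(A)` is analytic on
`{|z| < 1/(‖V‖_I M_A)}` with power series `∑ zⁿ Cₙ`, `Cₙ = ∫₀^∞ (R(t,A)V)ⁿ R(t,A) t dμ(t)`,
converging absolutely in the `I`-norm.  Here
`φ(A+zV) - φ(A) = ∫ t R(t,A+zV) (zV) R(t,A) dμ(t)`. -/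
theorem power_series_expansion_negative
    (I : OperatorIdeal X)
    (A : X →ₗ.[ℂ] X)
    (hAclosed : IsClosed (A.graph : Set (X × X)))
    (hAdense : Dense (A.domain : Set X))
    (RA : ℝ → (X →L[ℂ] X))
    (hRA : ∀ t ≥ (0 : ℝ), IsResolvent A t (RA t))
    (M : ℝ) (hM : IsLUB ((fun t => (1 + t) * ‖RA t‖) '' Ioi (0 : ℝ)) M)
    (μ : Measure ℝ) (hsupp : μ (Iic (0 : ℝ)) = 0)
    (hμ : Integrable (fun t => (1 + t)⁻¹) μ)
    (V : X →L[ℂ] X) (hV : I.Mem V)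
    (Rz : ℂ → ℝ → (X →L[ℂ] X))
    (hRz : ∀ z : ℂ, ‖z‖ < 1 / (I.inorm V * M) →
      ∀ t ≥ (0 : ℝ), IsResolvent (pAdd A (z • V)) t (Rz z t)) :
    (∀ z : ℂ, ‖z‖ < 1 / (I.inorm V * M) →
        HasSum (fun n : ℕ => z ^ (n + 1) •
            ∫ t, (t : ℂ) • ((RA t * V) ^ (n + 1) * RA t) ∂μ)
          (∫ t, (t : ℂ) • ((Rz z t).comp ((z • V).comp (RA t))) ∂μ)) ∧
      (∀ z : ℂ, ‖z‖ < 1 / (I.inorm V * M) →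
        Summable (fun n : ℕ =>
          ‖z‖ ^ (n + 1) * I.inorm (∫ t, (t : ℂ) • ((RA t * V) ^ (n + 1) * RA t) ∂μ))) ∧
      AnalyticOnNhd ℂ
        (fun z : ℂ => ∫ t, (t : ℂ) • ((Rz z t).comp ((z • V).comp (RA t))) ∂μ)
        (Metric.ball (0 : ℂ) (1 / (I.inorm V * M))) :=
  power_series_expansion_negative_general I A RA hRA M hM μ hsupp hμ V hV Rz hRz
end

section
/- Let $X$ be a Banach space with the approximation property, $A, B$ nonpositive operators with $D(A)\subseteq D(B)$ and $B-A$ nuclear. Then $\|\psi_\lambda(A) - \psi_\lambda(B)\|_{\mathfrak{S}_1} \le \frac{1}{\lambda} M_A M_B \|A-B\|_{\mathfrak{S}_1}$ for $\lambda > 0$, and consequently $\lim_{\lambda \to +\infty} \Delta_{B/A}(\lambda) = 1$. -/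
open MeasureTheory Set

variable {X : Type*} [NormedAddCommGroup X] [NormedSpace ℂ X] [CompleteSpace X]

/-- The perturbation determinant `Δ_{B/A}(λ) = exp(tr(ψ_λ(B) - ψ_λ(A)))`, where
`ψ_λ(s) = log λ - log(λ - s)` and, via the Hirsch calculus,
`ψ_λ(B) - ψ_λ(A) = ∫_λ^∞ (R(t,B) - R(t,A)) dt`, expressed through the resolvents
`RA, RB` of `A`, `B` and a trace `tr` on the nuclear operators. -/
noncomputable def pdet {X : Type*} [NormedAddCommGroup X] [NormedSpace ℂ X]
    [CompleteSpace X] (tr : (X →L[ℂ] X) → ℂ) (RA RB : ℝ → (X →L[ℂ] X)) (lam : ℝ) : ℂ :=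
  Complex.exp (tr (∫ t in Ioi lam, (RB t - RA t)))

/-- First resolvent identity. -/
lemma res_sub {A : X →ₗ.[ℂ] X} {s t : ℝ} {Rs Rt : X →L[ℂ] X}
    (hs : IsResolvent A s Rs) (ht : IsResolvent A t Rt) :
    Rs - Rt = ((t : ℂ) - s) • (Rs.comp Rt) := by
  ext x
  have hu := ht.mem x
  have h1 : (t : ℂ) • (Rt x) - A ⟨Rt x, hu⟩ = x := ht.right_inv x
  have h2 : Rs ((s : ℂ) • (Rt x) - A ⟨Rt x, hu⟩) = Rt x := hs.left_inv ⟨Rt x, hu⟩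
  have key : Rs x = ((t : ℂ) - s) • Rs (Rt x) + Rt x := by
    conv_lhs => rw [← h1]
    rw [show (t : ℂ) • (Rt x) - A ⟨Rt x, hu⟩
        = (((t : ℂ) - s) • Rt x) + ((s : ℂ) • (Rt x) - A ⟨Rt x, hu⟩) by module]
    rw [map_add, _root_.map_smul, h2]
  simp only [ContinuousLinearMap.sub_apply, ContinuousLinearMap.smul_apply,
    ContinuousLinearMap.comp_apply]
  rw [key]; abel

/-- Resolvents are continuous on `Ioi 0` given a uniform bound. -/
lemma res_contOn {A : X →ₗ.[ℂ] X} {RA : ℝ → (X →L[ℂ] X)}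
    (hRA : ∀ t > (0 : ℝ), IsResolvent A t (RA t)) {MA : ℝ}
    (hb : ∀ t > (0 : ℝ), t * ‖RA t‖ ≤ MA) (hMA0 : 0 ≤ MA) :
    ContinuousOn RA (Ioi (0 : ℝ)) := by
  intro t0 ht0
  rw [ContinuousWithinAt, ← tendsto_sub_nhds_zero_iff]
  have ht0' : (0 : ℝ) < t0 := ht0
  apply squeeze_zero_norm' (a := fun s => |t0 - s| * ((2 * MA / t0) * (MA / t0)))
  · have hne : Ioi (t0 / 2) ∈ nhdsWithin t0 (Ioi (0 : ℝ)) :=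
      nhdsWithin_le_nhds (Ioi_mem_nhds (by linarith))
    have hmem : Ioi (0 : ℝ) ∈ nhdsWithin t0 (Ioi (0 : ℝ)) := self_mem_nhdsWithin
    filter_upwards [hne, hmem] with s hs1 hs0
    have hs0' : (0 : ℝ) < s := hs0
    have := res_sub (hRA s hs0') (hRA t0 ht0')
    rw [this]
    refine le_trans (norm_smul_le ((t0:ℂ) - (s:ℂ)) ((RA s).comp (RA t0))) ?_
    have h1 : ‖RA s‖ ≤ 2 * MA / t0 := by
      have h := hb s hs0'
      rw [le_div_iff₀ ht0']
      nlinarith [norm_nonneg (RA s), mem_Ioi.mp hs1]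
    have h2 : ‖RA t0‖ ≤ MA / t0 := by
      have := hb t0 ht0'
      rw [le_div_iff₀ ht0']; linarith
    have h3 : ‖((t0 : ℂ) - s)‖ = |t0 - s| := by
      rw [show ((t0 : ℂ) - s) = ((t0 - s : ℝ) : ℂ) by push_cast; ring,
        Complex.norm_real, Real.norm_eq_abs]
    have := (RA s).opNorm_comp_le (RA t0)
    have hcomp : ‖(RA s).comp (RA t0)‖ ≤ (2 * MA / t0) * (MA / t0) := by
      calc ‖(RA s).comp (RA t0)‖ ≤ ‖RA s‖ * ‖RA t0‖ := this
        _ ≤ (2 * MA / t0) * (MA / t0) := by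
            apply mul_le_mul h1 h2 (norm_nonneg _) (by positivity)
    rw [h3]
    exact mul_le_mul_of_nonneg_left hcomp (abs_nonneg _)
  · have : Filter.Tendsto (fun s => |t0 - s|) (nhdsWithin t0 (Ioi (0:ℝ))) (nhds 0) := by
      have : Filter.Tendsto (fun s : ℝ => |t0 - s|) (nhds t0) (nhds |t0 - t0|) :=
        ((continuous_const.sub continuous_id).abs).tendsto t0
      simpa using this.mono_left nhdsWithin_le_nhds
    simpa using this.mul_const ((2 * MA / t0) * (MA / t0))

/-- For nonpositive operators `A, B` with `D(A) ⊆ D(B)` and nuclear `B - A`, one has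
`‖ψ_λ(A) - ψ_λ(B)‖_{S1} ≤ (1/λ) M_A M_B ‖A-B‖_{S1}` for `λ > 0`, and consequently
`Δ_{B/A}(λ) → 1` as `λ → +∞`. -/
theorem pdet_tendsto_one
    (S1 : OperatorIdeal X) (tr : (X →L[ℂ] X) → ℂ)
    (htr_add : ∀ S T : X →L[ℂ] X, S1.Mem S → S1.Mem T → tr (S + T) = tr S + tr T)
    (htr_bound : ∀ S : X →L[ℂ] X, S1.Mem S → ‖tr S‖ ≤ S1.inorm S)
    (A B : X →ₗ.[ℂ] X)
    (hAclosed : IsClosed (A.graph : Set (X × X)))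
    (hBclosed : IsClosed (B.graph : Set (X × X)))
    (hAdense : Dense (A.domain : Set X)) (hBdense : Dense (B.domain : Set X))
    (RA RB : ℝ → (X →L[ℂ] X))
    (hRA : ∀ t > (0 : ℝ), IsResolvent A t (RA t))
    (hRB : ∀ t > (0 : ℝ), IsResolvent B t (RB t))
    (MA MB : ℝ)
    (hMA : IsLUB ((fun t => t * ‖RA t‖) '' Ioi (0 : ℝ)) MA)
    (hMB : IsLUB ((fun t => t * ‖RB t‖) '' Ioi (0 : ℝ)) MB)
    (hdom : A.domain ≤ B.domain)
    (W : X →L[ℂ] X) (hW : S1.Mem W)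
    (hWext : ∀ x : A.domain, W (x : X) = B ⟨(x : X), hdom x.2⟩ - A x) :
    (∀ lam > (0 : ℝ),
        S1.inorm (∫ t in Ioi lam, (RA t - RB t)) ≤
          (1 / lam) * (MA * MB * S1.inorm W)) ∧
      Filter.Tendsto (fun lam => pdet tr RA RB lam) Filter.atTop (nhds 1) := by
  set c := S1.inorm W with hc_def
  have hc : 0 ≤ c := S1.inorm_nonneg W
  have hMA' : ∀ t > (0 : ℝ), t * ‖RA t‖ ≤ MA := fun t ht => hMA.1 ⟨t, ht, rfl⟩
  have hMB' : ∀ t > (0 : ℝ), t * ‖RB t‖ ≤ MB := fun t ht => hMB.1 ⟨t, ht, rfl⟩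
  have hMA0 : 0 ≤ MA := le_trans (by positivity) (hMA' 1 one_pos)
  have hMB0 : 0 ≤ MB := le_trans (by positivity) (hMB' 1 one_pos)
  -- second resolvent identity
  have key : ∀ t > (0 : ℝ), RA t - RB t = -((RB t).comp (W.comp (RA t))) := by
    intro t ht
    ext x
    have hu : RA t x ∈ A.domain := (hRA t ht).mem x
    have huB : RA t x ∈ B.domain := hdom hu
    have h1 : (t : ℂ) • (RA t x) - A ⟨RA t x, hu⟩ = x := (hRA t ht).right_inv x
    have hWu : W (RA t x) = B ⟨RA t x, huB⟩ - A ⟨RA t x, hu⟩ := hWext ⟨RA t x, hu⟩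
    have h2 : RB t ((t : ℂ) • (RA t x) - B ⟨RA t x, huB⟩) = RA t x :=
      (hRB t ht).left_inv ⟨RA t x, huB⟩
    have e1 : ((t : ℂ) • (RA t x) - A ⟨RA t x, hu⟩) - W (RA t x) = x - W (RA t x) := by
      rw [h1]
    have e2 : ((t : ℂ) • (RA t x) - A ⟨RA t x, hu⟩) - W (RA t x)
        = (t : ℂ) • (RA t x) - B ⟨RA t x, huB⟩ := by
      rw [hWu]; abel
    have h2' : RB t x - RB t (W (RA t x)) = RA t x := by
      rw [← map_sub, ← e1, e2]; exact h2
    simp only [ContinuousLinearMap.sub_apply, ContinuousLinearMap.neg_apply,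
      ContinuousLinearMap.comp_apply]
    conv_lhs => rw [← h2']
    abel
  -- the main estimate
  have hmain : ∀ lam > (0 : ℝ), S1.Mem (∫ t in Ioi lam, (RA t - RB t)) ∧
      S1.inorm (∫ t in Ioi lam, (RA t - RB t)) ≤ (1 / lam) * (MA * MB * c) := by
    intro lam hlam
    set f : ℝ → (X →L[ℂ] X) := fun t => RA t - RB t with hf_def
    set g : ℝ → ℝ := fun t => (MA * MB * c) * t ^ (-2 : ℝ) with hg_def
    have hg_int : Integrable g ((volume : Measure ℝ).restrict (Ioi lam)) :=
      (integrableOn_Ioi_rpow_of_lt (by norm_num) hlam).const_mul (MA * MB * c)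
    have hptwise : ∀ t ∈ Ioi lam, S1.Mem (f t) ∧ S1.inorm (f t) ≤ g t := by
      intro t ht
      have ht0 : (0 : ℝ) < t := lt_trans hlam ht
      have hmemC : S1.Mem ((RB t).comp (W.comp (RA t))) := S1.comp_mem (RB t) (RA t) hW
      have hmemf : S1.Mem (f t) := by
        have := S1.smul_mem (-1 : ℂ) hmemC
        rw [neg_one_smul] at this
        rw [hf_def]; simpa [key t ht0] using this
      refine ⟨hmemf, ?_⟩
      have hnorm_eq : S1.inorm (f t) = S1.inorm ((RB t).comp (W.comp (RA t))) := by
        have := S1.inorm_smul (-1 : ℂ) ((RB t).comp (W.comp (RA t)))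
        rw [neg_one_smul] at this
        simp only [hf_def, key t ht0]
        simpa using this
      rw [hnorm_eq]
      have h1 := S1.inorm_comp_le (RB t) W (RA t) hW
      have h2 : ‖RB t‖ * c * ‖RA t‖ ≤ (MA * MB * c) * t ^ (-2 : ℝ) := by
        have hrpow : t ^ (-2 : ℝ) = (t ^ 2)⁻¹ := by
          rw [show (-2 : ℝ) = ((-2 : ℤ) : ℝ) by norm_num, Real.rpow_intCast,
            zpow_neg, zpow_two, sq]
        rw [hrpow, ← div_eq_mul_inv, le_div_iff₀ (by positivity)]
        have hA := hMA' t ht0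
        have hB := hMB' t ht0
        have hBA : (t * ‖RB t‖) * (t * ‖RA t‖) ≤ MB * MA :=
          mul_le_mul hB hA (by positivity) hMB0
        nlinarith [norm_nonneg (RA t), norm_nonneg (RB t), hc]
      exact le_trans h1 h2
    have hcont : ContinuousOn f (Ioi (0 : ℝ)) :=
      (res_contOn hRA hMA' hMA0).sub (res_contOn hRB hMB' hMB0)
    haveI : SecondCountableTopologyEither ℝ (X →L[ℂ] X) :=
      secondCountableTopologyEither_of_left ℝ _
    have hmeas : AEStronglyMeasurable f ((volume : Measure ℝ).restrict (Ioi lam)) :=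
      (hcont.mono (Ioi_subset_Ioi hlam.le)).aestronglyMeasurable measurableSet_Ioi
    have hae : ∀ᵐ t ∂((volume : Measure ℝ).restrict (Ioi lam)),
        S1.Mem (f t) ∧ S1.inorm (f t) ≤ g t :=
      (ae_restrict_mem measurableSet_Ioi).mono fun t ht => hptwise t ht
    have hf_int : Integrable f ((volume : Measure ℝ).restrict (Ioi lam)) := by
      refine hg_int.mono' hmeas ?_
      refine (ae_restrict_mem measurableSet_Ioi).mono fun t ht => ?_
      exact le_trans (S1.opNorm_le_inorm (f t) (hptwise t ht).1) (hptwise t ht).2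
    obtain ⟨hmemI, hI⟩ := S1.integral_mem _ f g hg_int hae hf_int
    refine ⟨hmemI, le_trans hI (le_of_eq ?_)⟩
    rw [hg_def]
    simp only
    rw [MeasureTheory.integral_const_mul, integral_Ioi_rpow_of_lt (by norm_num) hlam,
      show (-2 : ℝ) + 1 = -1 by norm_num, Real.rpow_neg_one]
    field_simp
  constructor
  · exact fun lam hlam => (hmain lam hlam).2
  · -- the tendsto part
    have hflip : ∀ lam : ℝ, (∫ t in Ioi lam, (RB t - RA t)) =
        -∫ t in Ioi lam, (RA t - RB t) := by
      intro lam
      rw [← integral_neg]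
      simp [neg_sub]
    have htr0 : Filter.Tendsto (fun lam => tr (∫ t in Ioi lam, (RB t - RA t)))
        Filter.atTop (nhds 0) := by
      apply squeeze_zero_norm' (a := fun lam => (1 / lam) * (MA * MB * c))
      · filter_upwards [Filter.eventually_gt_atTop (0 : ℝ)] with lam hlam
        obtain ⟨hmemI, hI⟩ := hmain lam hlam
        have hmemneg : S1.Mem (-∫ t in Ioi lam, (RA t - RB t)) := by
          have := S1.smul_mem (-1 : ℂ) hmemI
          rwa [neg_one_smul] at this
        have hinormneg : S1.inorm (-∫ t in Ioi lam, (RA t - RB t)) =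
            S1.inorm (∫ t in Ioi lam, (RA t - RB t)) := by
          have := S1.inorm_smul (-1 : ℂ) (∫ t in Ioi lam, (RA t - RB t))
          rw [neg_one_smul] at this
          simpa using this
        rw [hflip]
        calc ‖tr (-∫ t in Ioi lam, (RA t - RB t))‖
            ≤ S1.inorm (-∫ t in Ioi lam, (RA t - RB t)) := htr_bound _ hmemneg
          _ = S1.inorm (∫ t in Ioi lam, (RA t - RB t)) := hinormneg
          _ ≤ (1 / lam) * (MA * MB * c) := hI
      · have : Filter.Tendsto (fun lam : ℝ => lam⁻¹ * (MA * MB * c))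
            Filter.atTop (nhds (0 * (MA * MB * c))) :=
          tendsto_inv_atTop_zero.mul_const _
        simpa [one_div] using this
    have := (Complex.continuous_exp.tendsto 0).comp htr0
    simp only [Function.comp_def, Complex.exp_zero] at this
    exact this
end

section
/- Let $A, B$ be nonpositive operators on a Banach space $X$ with the approximation property, $A \ne B$, $D(A)\subseteq D(B)$, and $B - A$ nuclear. Then for all $\lambda > 1/(2\|A-B\|)$, the perturbation determinant $\Delta_{B/A}$ is differentiable at $\lambda$ and $\frac{\Delta'_{B/A}(\lambda)}{\Delta_{B/A}(\lambda)} = \mathrm{tr}\big(R(\lambda, A) - R(\lambda, B)\big)$. -/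
open MeasureTheory Set

variable {X : Type*} [NormedAddCommGroup X] [NormedSpace ℂ X] [CompleteSpace X]

/-!
By the second resolvent identity `f t = R(t,B) - R(t,A) = R(t,B) W R(t,A)` lies in the ideal,
with `‖f t‖_I ≤ M_B ‖W‖_I M_A / t²`, and by the first resolvent identity `f` is Lipschitz for
`‖·‖_I` on every half-line `[a, ∞)`, `a > 0`. So `Φ(l) = tr ∫_l^∞ f` is well defined, and
`Φ l - Φ λ + (l - λ) tr (f λ) = -tr ∫_λ^l (f u - f λ) du = O((l - λ)²)` because `tr` is
additive and bounded by `‖·‖_I`. Hence `Φ' λ = -tr (f λ) = tr (R(λ,A) - R(λ,B))`, and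
`Δ = exp ∘ Φ` gives the claim by the chain rule.
-/

open Filter Topology

theorem hasDerivAt_of_norm_sub_sub_le_sq {𝕜 E : Type*} [NontriviallyNormedField 𝕜]
    [NormedAddCommGroup E] [NormedSpace 𝕜 E] {F : 𝕜 → E} {c : E} {x : 𝕜} (K : ℝ)
    (h : ∀ᶠ y in 𝓝 x, ‖F y - F x - (y - x) • c‖ ≤ K * ‖y - x‖ ^ 2) : HasDerivAt F c x := by
  rw [hasDerivAt_iff_isLittleO]
  refine (Asymptotics.IsBigO.of_bound K ?_).trans_isLittleO
    (Asymptotics.isLittleO_pow_sub_sub x one_lt_two)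
  simpa only [norm_pow, norm_norm] using h

theorem integrableOn_Ioi_const_div_sq (C : ℝ) {a : ℝ} (ha : 0 < a) :
    IntegrableOn (fun t : ℝ => C / t ^ 2) (Ioi a) := by
  have hrpow : IntegrableOn (fun t : ℝ => C * t ^ (-2 : ℝ)) (Ioi a) :=
    (integrableOn_Ioi_rpow_of_lt (by norm_num) ha).const_mul C
  refine hrpow.congr_fun (fun t ht => ?_) measurableSet_Ioi
  beta_reduce
  rw [Real.rpow_neg (ha.trans ht).le, Real.rpow_two, div_eq_mul_inv]

theorem norm_le_div_of_forall_mul_norm_le {E : Type*} [SeminormedAddCommGroup E] {R : ℝ → E}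
    {M a t : ℝ} (hM : ∀ t > 0, t * ‖R t‖ ≤ M) (ha : 0 < a) (ht : a ≤ t) : ‖R t‖ ≤ M / a := by
  rw [le_div_iff₀ ha, mul_comm]
  exact (mul_le_mul_of_nonneg_right ht (norm_nonneg _)).trans (hM t (ha.trans_le ht))

section

omit [CompleteSpace X]

namespace IsResolvent

variable {A B : X →ₗ.[ℂ] X} {t s : ℝ} {R S : X →L[ℂ] X}

theorem sub_eq_smul_comp_s19 (ht : IsResolvent A t R) (hs : IsResolvent A s S) :
    R - S = ((s : ℂ) - t) • R.comp S := by
  ext x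
  have hx : (s : ℂ) • S x - A ⟨S x, hs.mem x⟩ = x := hs.right_inv x
  have hR : R ((t : ℂ) • S x - A ⟨S x, hs.mem x⟩) = S x := ht.left_inv ⟨S x, hs.mem x⟩
  have hsplit : x = ((t : ℂ) • S x - A ⟨S x, hs.mem x⟩) + ((s : ℂ) - t) • S x := by
    rw [sub_smul]; nth_rewrite 1 [← hx]; abel
  have hRx : R x = S x + ((s : ℂ) - t) • R (S x) := by
    conv_lhs => rw [hsplit]
    rw [map_add, hR, map_smul]
  simp only [sub_apply, smul_apply, ContinuousLinearMap.comp_apply, hRx, add_sub_cancel_left]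

theorem sub_eq_comp_comp (hdom : A.domain ≤ B.domain) {W : X →L[ℂ] X}
    (hWext : ∀ x : A.domain, W (x : X) = B ⟨(x : X), hdom x.2⟩ - A x)
    (hA : IsResolvent A t R) (hB : IsResolvent B t S) :
    S - R = S.comp (W.comp R) := by
  ext x
  have hx : (t : ℂ) • R x - A ⟨R x, hA.mem x⟩ = x := hA.right_inv x
  have hSx : S (x - W (R x)) = R x := by
    have : x - W (R x) = (t : ℂ) • R x - B ⟨R x, hdom (hA.mem x)⟩ := by
      rw [hWext ⟨R x, hA.mem x⟩]; nth_rewrite 1 [← hx]; abel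
    rw [this]
    exact hB.left_inv ⟨R x, hdom (hA.mem x)⟩
  rw [map_sub, sub_eq_iff_eq_add] at hSx
  simp only [sub_apply, ContinuousLinearMap.comp_apply, hSx]
  abel

end IsResolvent

namespace OperatorIdeal

variable (I : OperatorIdeal X)

theorem neg_mem {S : X →L[ℂ] X} (hS : I.Mem S) : I.Mem (-S) := by
  simpa using I.smul_mem (-1) hS

theorem sub_mem {S T : X →L[ℂ] X} (hS : I.Mem S) (hT : I.Mem T) : I.Mem (S - T) := by
  simpa only [sub_eq_add_neg] using I.add_mem hS (I.neg_mem hT)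

theorem inorm_neg (S : X →L[ℂ] X) : I.inorm (-S) = I.inorm S := by
  simpa using I.inorm_smul (-1) S

theorem setIntegral_mem {f : ℝ → X →L[ℂ] X} {g : ℝ → ℝ} {s : Set ℝ} (hs : MeasurableSet s)
    (hg : IntegrableOn g s) (h : ∀ t ∈ s, I.Mem (f t) ∧ I.inorm (f t) ≤ g t)
    (hf : IntegrableOn f s) :
    I.Mem (∫ t in s, f t) ∧ I.inorm (∫ t in s, f t) ≤ ∫ t in s, g t :=
  I.integral_mem _ f g hg ((ae_restrict_iff' hs).2 (Eventually.of_forall h)) hf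

theorem intervalIntegral_mem {f : ℝ → X →L[ℂ] X} {a b C : ℝ}
    (h : ∀ t ∈ uIoc a b, I.Mem (f t) ∧ I.inorm (f t) ≤ C) (hf : IntervalIntegrable f volume a b) :
    I.Mem (∫ t in a..b, f t) ∧ I.inorm (∫ t in a..b, f t) ≤ C * |b - a| := by
  obtain ⟨hmem, hle⟩ := I.setIntegral_mem measurableSet_uIoc
    (integrableOn_const (by simp [Real.volume_uIoc])) h (intervalIntegrable_iff.1 hf)
  rw [setIntegral_const, measureReal_def, Real.volume_uIoc, ENNReal.toReal_ofReal (abs_nonneg _),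
    smul_eq_mul, mul_comm] at hle
  rw [intervalIntegral.intervalIntegral_eq_integral_uIoc]
  split_ifs
  · simpa using And.intro hmem hle
  · simpa [I.inorm_neg] using And.intro (I.neg_mem hmem) hle

theorem inorm_comp_comp_sub_comp_comp_le {W : X →L[ℂ] X} (hW : I.Mem W) (P Q P' Q' : X →L[ℂ] X) :
    I.inorm (P.comp (W.comp Q) - P'.comp (W.comp Q')) ≤
      ‖P - P'‖ * I.inorm W * ‖Q‖ + ‖P'‖ * I.inorm W * ‖Q - Q'‖ := by
  have hsplit : P.comp (W.comp Q) - P'.comp (W.comp Q') =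
      (P - P').comp (W.comp Q) + P'.comp (W.comp (Q - Q')) := by
    simp only [ContinuousLinearMap.sub_comp, ContinuousLinearMap.comp_sub]
    abel
  rw [hsplit]
  exact (I.inorm_add_le _ _).trans
    (add_le_add (I.inorm_comp_le _ _ _ hW) (I.inorm_comp_le _ _ _ hW))

theorem continuousOn_of_inorm_sub_le {f : ℝ → X →L[ℂ] X} {s : Set ℝ} {K : ℝ}
    (hmem : ∀ t ∈ s, I.Mem (f t)) (hlip : ∀ u ∈ s, ∀ v ∈ s, I.inorm (f u - f v) ≤ K * |u - v|) :
    ContinuousOn f s := by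
  refine (LipschitzOnWith.of_dist_le_mul fun u hu v hv => ?_ :
    LipschitzOnWith K.toNNReal f s).continuousOn
  rw [dist_eq_norm, Real.dist_eq]
  exact (I.opNorm_le_inorm _ (I.sub_mem (hmem u hu) (hmem v hv))).trans
    ((hlip u hu v hv).trans (by gcongr; exact Real.le_coe_toNNReal K))

end OperatorIdeal

theorem norm_resolvent_sub_le {A : X →ₗ.[ℂ] X} {R : ℝ → X →L[ℂ] X} {M a u v : ℝ}
    (hR : ∀ t > 0, IsResolvent A t (R t)) (hM : ∀ t > 0, t * ‖R t‖ ≤ M) (ha : 0 < a)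
    (hu : a ≤ u) (hv : a ≤ v) : ‖R u - R v‖ ≤ (M / a) ^ 2 * |u - v| := by
  have hM0 : 0 ≤ M / a := (norm_nonneg _).trans (norm_le_div_of_forall_mul_norm_le hM ha le_rfl)
  rw [(hR u (ha.trans_le hu)).sub_eq_smul_comp_s19 (hR v (ha.trans_le hv)), norm_smul,
    ← Complex.ofReal_sub, Complex.norm_real, Real.norm_eq_abs, abs_sub_comm, mul_comm, sq]
  gcongr
  exact ((R u).opNorm_comp_le (R v)).trans (mul_le_mul (norm_le_div_of_forall_mul_norm_le hM ha hu)
    (norm_le_div_of_forall_mul_norm_le hM ha hv) (norm_nonneg _) hM0)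

variable {A B : X →ₗ.[ℂ] X} {RA RB : ℝ → X →L[ℂ] X} {MA MB : ℝ} {W : X →L[ℂ] X}

theorem inorm_resolvent_sub_le (I : OperatorIdeal X) (hRA : ∀ t > 0, IsResolvent A t (RA t))
    (hRB : ∀ t > 0, IsResolvent B t (RB t)) (hMA : ∀ t > 0, t * ‖RA t‖ ≤ MA)
    (hMB : ∀ t > 0, t * ‖RB t‖ ≤ MB) (hdom : A.domain ≤ B.domain) (hW : I.Mem W)
    (hWext : ∀ x : A.domain, W (x : X) = B ⟨(x : X), hdom x.2⟩ - A x) {t : ℝ} (ht : 0 < t) :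
    I.Mem (RB t - RA t) ∧ I.inorm (RB t - RA t) ≤ MB * I.inorm W * MA / t ^ 2 := by
  rw [(hRA t ht).sub_eq_comp_comp hdom hWext (hRB t ht)]
  refine ⟨I.comp_mem _ _ hW, (I.inorm_comp_le _ _ _ hW).trans ?_⟩
  have hRAt := norm_le_div_of_forall_mul_norm_le hMA ht le_rfl
  have hRBt := norm_le_div_of_forall_mul_norm_le hMB ht le_rfl
  have hI0 := I.inorm_nonneg W
  calc ‖RB t‖ * I.inorm W * ‖RA t‖ ≤ MB / t * I.inorm W * (MA / t) := by
        have hMB0 : 0 ≤ MB / t := (norm_nonneg _).trans hRBt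
        gcongr
    _ = MB * I.inorm W * MA / t ^ 2 := by field_simp

theorem inorm_resolvent_sub_sub_le (I : OperatorIdeal X) (hRA : ∀ t > 0, IsResolvent A t (RA t))
    (hRB : ∀ t > 0, IsResolvent B t (RB t)) (hMA : ∀ t > 0, t * ‖RA t‖ ≤ MA)
    (hMB : ∀ t > 0, t * ‖RB t‖ ≤ MB) (hdom : A.domain ≤ B.domain) (hW : I.Mem W)
    (hWext : ∀ x : A.domain, W (x : X) = B ⟨(x : X), hdom x.2⟩ - A x) {a u v : ℝ} (ha : 0 < a)
    (hu : a ≤ u) (hv : a ≤ v) :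
    I.inorm ((RB u - RA u) - (RB v - RA v)) ≤
      I.inorm W * ((MB / a) ^ 2 * (MA / a) + MB / a * (MA / a) ^ 2) * |u - v| := by
  rw [(hRA u (ha.trans_le hu)).sub_eq_comp_comp hdom hWext (hRB u (ha.trans_le hu)),
    (hRA v (ha.trans_le hv)).sub_eq_comp_comp hdom hWext (hRB v (ha.trans_le hv))]
  refine (I.inorm_comp_comp_sub_comp_comp_le hW _ _ _ _).trans ?_
  have hMA0 : 0 ≤ MA / a := (norm_nonneg _).trans (norm_le_div_of_forall_mul_norm_le hMA ha le_rfl)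
  have hMB0 : 0 ≤ MB / a := (norm_nonneg _).trans (norm_le_div_of_forall_mul_norm_le hMB ha le_rfl)
  have hI0 := I.inorm_nonneg W
  calc ‖RB u - RB v‖ * I.inorm W * ‖RA u‖ + ‖RB v‖ * I.inorm W * ‖RA u - RA v‖
      ≤ (MB / a) ^ 2 * |u - v| * I.inorm W * (MA / a) +
          MB / a * I.inorm W * ((MA / a) ^ 2 * |u - v|) := by
        gcongr
        · exact norm_resolvent_sub_le hRB hMB ha hu hv
        · exact norm_le_div_of_forall_mul_norm_le hMA ha hu
        · exact norm_le_div_of_forall_mul_norm_le hMB ha hv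
        · exact norm_resolvent_sub_le hRA hMA ha hu hv
    _ = I.inorm W * ((MB / a) ^ 2 * (MA / a) + MB / a * (MA / a) ^ 2) * |u - v| := by ring

end

theorem hasDerivAt_trace_setIntegral_Ioi (I : OperatorIdeal X) {tr : (X →L[ℂ] X) → ℂ}
    (htr_add : ∀ S T, I.Mem S → I.Mem T → tr (S + T) = tr S + tr T)
    (htr_smul : ∀ (c : ℂ) S, I.Mem S → tr (c • S) = c * tr S)
    (htr_bound : ∀ S, I.Mem S → ‖tr S‖ ≤ I.inorm S)
    {f : ℝ → X →L[ℂ] X} {g : ℝ → ℝ} {a K lam : ℝ} (hmem : ∀ t, a ≤ t → I.Mem (f t))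
    (hlip : ∀ u v, a ≤ u → a ≤ v → I.inorm (f u - f v) ≤ K * |u - v|)
    (hg : IntegrableOn g (Ioi a)) (hfg : ∀ t, a ≤ t → I.inorm (f t) ≤ g t) (hlam : a < lam) :
    HasDerivAt (fun l => tr (∫ t in Ioi l, f t)) (-tr (f lam)) lam := by
  have hK : 0 ≤ K := by
    simpa using (I.inorm_nonneg _).trans (hlip (a + 1) a (by linarith) le_rfl)
  have hcont : ContinuousOn f (Ici a) :=
    I.continuousOn_of_inorm_sub_le hmem fun u hu v hv => hlip u v hu hv
  have hint : ∀ μ, a ≤ μ → IntegrableOn f (Ioi μ) := by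
    intro μ hμ
    have hsub : Ioi μ ⊆ Ici a := fun t ht => hμ.trans (le_of_lt ht)
    refine Integrable.mono' (hg.mono_set (Ioi_subset_Ioi hμ))
      ((hcont.mono hsub).aestronglyMeasurable measurableSet_Ioi) ?_
    filter_upwards [ae_restrict_mem measurableSet_Ioi] with t ht
    exact (I.opNorm_le_inorm _ (hmem t (hsub ht))).trans (hfg t (hsub ht))
  have hmemIoi : ∀ μ, a ≤ μ → I.Mem (∫ t in Ioi μ, f t) := fun μ hμ =>
    (I.setIntegral_mem measurableSet_Ioi (hg.mono_set (Ioi_subset_Ioi hμ))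
      (fun t ht => ⟨hmem t (hμ.trans (le_of_lt ht)), hfg t (hμ.trans (le_of_lt ht))⟩) (hint μ hμ)).1
  refine hasDerivAt_of_norm_sub_sub_le_sq K ?_
  filter_upwards [Ioi_mem_nhds hlam] with l hl
  have hsub : uIcc lam l ⊆ Ici a := fun t ht => (le_min hlam.le hl.le).trans ht.1
  have hfl : IntervalIntegrable f volume lam l := (hcont.mono hsub).intervalIntegrable
  set E := ∫ u in lam..l, (f u - f lam)
  obtain ⟨hE, hEle⟩ : I.Mem E ∧ I.inorm E ≤ K * |l - lam| * |l - lam| :=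
    I.intervalIntegral_mem (fun t ht => ⟨I.sub_mem (hmem t (hsub (uIoc_subset_uIcc ht)))
      (hmem lam hlam.le), (hlip t lam (hsub (uIoc_subset_uIcc ht)) hlam.le).trans
        (mul_le_mul_of_nonneg_left (abs_sub_left_of_mem_uIcc (uIoc_subset_uIcc ht)) hK)⟩)
      (hfl.sub intervalIntegrable_const)
  have hsplit :
      ∫ t in Ioi lam, f t = (∫ t in Ioi l, f t) + (E + ((l - lam : ℝ) : ℂ) • f lam) := by
    rw [← intervalIntegral.integral_interval_add_Ioi (hint lam hlam.le) (hint l hl.le), add_comm]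
    simp only [E]
    rw [intervalIntegral.integral_sub hfl intervalIntegrable_const, intervalIntegral.integral_const,
      ← Complex.coe_smul]
    abel
  have hlam_mem : I.Mem (((l - lam : ℝ) : ℂ) • f lam) := I.smul_mem _ (hmem lam hlam.le)
  have htr :
      tr (∫ t in Ioi l, f t) - tr (∫ t in Ioi lam, f t) - (l - lam) • -tr (f lam) = -tr E := by
    rw [hsplit, htr_add _ _ (hmemIoi l hl.le) (I.add_mem hE hlam_mem), htr_add _ _ hE hlam_mem,
      htr_smul _ _ (hmem lam hlam.le), Complex.real_smul]
    push_cast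
    ring
  rw [htr, norm_neg, Real.norm_eq_abs]
  calc ‖tr E‖ ≤ I.inorm E := htr_bound E hE
    _ ≤ K * |l - lam| ^ 2 := by rw [sq, ← mul_assoc]; exact hEle

theorem pdet_logDeriv_general
    (S1 : OperatorIdeal X) (tr : (X →L[ℂ] X) → ℂ)
    (htr_add : ∀ S T : X →L[ℂ] X, S1.Mem S → S1.Mem T → tr (S + T) = tr S + tr T)
    (htr_smul : ∀ (c : ℂ) (S : X →L[ℂ] X), S1.Mem S → tr (c • S) = c * tr S)
    (htr_bound : ∀ S : X →L[ℂ] X, S1.Mem S → ‖tr S‖ ≤ S1.inorm S)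
    (A B : X →ₗ.[ℂ] X)
    (RA RB : ℝ → (X →L[ℂ] X))
    (hRA : ∀ t > (0 : ℝ), IsResolvent A t (RA t))
    (hRB : ∀ t > (0 : ℝ), IsResolvent B t (RB t))
    (MA MB : ℝ)
    (hMA : IsLUB ((fun t => t * ‖RA t‖) '' Ioi (0 : ℝ)) MA)
    (hMB : IsLUB ((fun t => t * ‖RB t‖) '' Ioi (0 : ℝ)) MB)
    (hdom : A.domain ≤ B.domain)
    (W : X →L[ℂ] X) (hW : S1.Mem W)
    (hWext : ∀ x : A.domain, W (x : X) = B ⟨(x : X), hdom x.2⟩ - A x) :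
    ∀ lam : ℝ, 1 / (2 * ‖W‖) < lam →
      HasDerivAt (fun l => pdet tr RA RB l)
        (pdet tr RA RB lam * tr (RA lam - RB lam)) lam := by
  intro lam hlam
  have hlam0 : 0 < lam := (by positivity : (0 : ℝ) ≤ 1 / (2 * ‖W‖)).trans_lt hlam
  have hMA' : ∀ t > 0, t * ‖RA t‖ ≤ MA := fun t ht => hMA.1 ⟨t, ht, rfl⟩
  have hMB' : ∀ t > 0, t * ‖RB t‖ ≤ MB := fun t ht => hMB.1 ⟨t, ht, rfl⟩
  have hbound := fun t (ht : 0 < t) => inorm_resolvent_sub_le S1 hRA hRB hMA' hMB' hdom hW hWext ht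
  have hderiv := hasDerivAt_trace_setIntegral_Ioi S1 htr_add htr_smul htr_bound
    (fun t ht => (hbound t (by linarith)).1)
    (fun u v hu hv => inorm_resolvent_sub_sub_le S1 hRA hRB hMA' hMB' hdom hW hWext
      (half_pos hlam0) hu hv)
    (integrableOn_Ioi_const_div_sq _ (half_pos hlam0)) (fun t ht => (hbound t (by linarith)).2)
    (half_lt_self hlam0)
  have htr : tr (RA lam - RB lam) = -tr (RB lam - RA lam) := by
    rw [← neg_sub, ← neg_one_smul ℂ, htr_smul _ _ (hbound lam hlam0).1, neg_one_mul]
  rw [htr]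
  exact hderiv.cexp

/-- Theorem 4: for nonpositive operators `A ≠ B` with `D(A) ⊆ D(B)` and nuclear `B - A`
(with bounded extension `W`), for all `λ > 1/(2‖A-B‖)` the perturbation determinant is
differentiable at `λ` with `Δ'_{B/A}(λ)/Δ_{B/A}(λ) = tr(R(λ,A) - R(λ,B))`. -/
theorem pdet_logDeriv
    (S1 : OperatorIdeal X) (tr : (X →L[ℂ] X) → ℂ)
    (htr_add : ∀ S T : X →L[ℂ] X, S1.Mem S → S1.Mem T → tr (S + T) = tr S + tr T)
    (htr_smul : ∀ (c : ℂ) (S : X →L[ℂ] X), S1.Mem S → tr (c • S) = c * tr S)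
    (htr_bound : ∀ S : X →L[ℂ] X, S1.Mem S → ‖tr S‖ ≤ S1.inorm S)
    (A B : X →ₗ.[ℂ] X) (hAB : A ≠ B)
    (hAclosed : IsClosed (A.graph : Set (X × X)))
    (hBclosed : IsClosed (B.graph : Set (X × X)))
    (hAdense : Dense (A.domain : Set X)) (hBdense : Dense (B.domain : Set X))
    (RA RB : ℝ → (X →L[ℂ] X))
    (hRA : ∀ t > (0 : ℝ), IsResolvent A t (RA t))
    (hRB : ∀ t > (0 : ℝ), IsResolvent B t (RB t))
    (MA MB : ℝ)
    (hMA : IsLUB ((fun t => t * ‖RA t‖) '' Ioi (0 : ℝ)) MA)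
    (hMB : IsLUB ((fun t => t * ‖RB t‖) '' Ioi (0 : ℝ)) MB)
    (hdom : A.domain ≤ B.domain)
    (W : X →L[ℂ] X) (hW : S1.Mem W)
    (hWext : ∀ x : A.domain, W (x : X) = B ⟨(x : X), hdom x.2⟩ - A x) :
    ∀ lam : ℝ, 1 / (2 * ‖W‖) < lam →
      HasDerivAt (fun l => pdet tr RA RB l)
        (pdet tr RA RB lam * tr (RA lam - RB lam)) lam :=
  pdet_logDeriv_general S1 tr htr_add htr_smul htr_bound A B RA RB hRA hRB MA MB hMA hMB hdom W hW
    hWext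
end
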